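/- arXiv:math/0204234 — 7 statements merged into one kernel-verified Lean document; each statement's English description precedes it below -/
import Mathlib

section
/- For every integer K ≥ 1 there exists p₀ = p₀(K) such that the following holds: if F is a finite field with char(F) ≥ p₀, n ≥ 2, P₁, …, P_K ∈ F[x₁,…,x_n] are nonzero polynomials each of degree at most K, and E ⊆ ⋃_{i=1}^{K} {x ∈ F^n : P_i(x) = 0}, then E is not a Besicovitch set. -/
open scoped BigOperators

/-- The line `l(x₀, v) = {(x₀ + t v, t) : t ∈ F} ⊆ F^m × F`. -/
def lineSet {F : Type*} [Field F] {m : ℕ} (x₀ v : Fin m → F) : Set ((Fin m → F) × F) :=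
  {p | ∃ t : F, p = (x₀ + t • v, t)}

/-- A Besicovitch set in `F^m × F = F^{m+1}`: a set containing a line in every direction. -/
def IsBesicovitch {F : Type*} [Field F] {m : ℕ} (E : Set ((Fin m → F) × F)) : Prop :=
  ∀ v : Fin m → F, ∃ x₀ : Fin m → F, lineSet x₀ v ⊆ E

private lemma my_coeff_prod {R : Type*} [CommSemiring R] {ι : Type*} (s : Finset ι)
    (f : ι → Polynomial R) (n : ι → ℕ) (h : ∀ i ∈ s, (f i).natDegree ≤ n i) :
    (∏ i ∈ s, f i).coeff (∑ i ∈ s, n i) = ∏ i ∈ s, (f i).coeff (n i) := by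
  classical
  induction s using Finset.cons_induction with
  | empty => simp
  | cons a s ha ih =>
    rw [Finset.prod_cons, Finset.sum_cons, Finset.prod_cons,
      Polynomial.coeff_mul_add_eq_of_natDegree_le (h a (Finset.mem_cons_self a s))
        ((Polynomial.natDegree_prod_le s f).trans
          (Finset.sum_le_sum fun i hi => h i (Finset.mem_cons_of_mem hi))),
      ih fun i hi => h i (Finset.mem_cons_of_mem hi)]

private lemma eval_mul_of_isHomogeneous {F : Type*} [CommSemiring F] {σ : Type*} [Fintype σ]
    {φ : MvPolynomial σ F} {n : ℕ} (h : φ.IsHomogeneous n) (c : F) (w : σ → F) :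
    MvPolynomial.eval (fun i => c * w i) φ = c ^ n * MvPolynomial.eval w φ := by
  rw [MvPolynomial.eval_eq', MvPolynomial.eval_eq', Finset.mul_sum]
  refine Finset.sum_congr rfl fun b hb => ?_
  have h1 : Finsupp.degree b = n := by
    rw [Finsupp.degree_eq_weight_one]
    exact h (MvPolynomial.mem_support_iff.mp hb)
  have hbn : ∑ i, b i = n := by
    rw [← h1]
    exact (Finset.sum_subset (Finset.subset_univ _)
      fun x _ hx => Finsupp.notMem_support_iff.mp hx).symm
  simp_rw [mul_pow]
  rw [Finset.prod_mul_distrib, Finset.prod_pow_eq_pow_sum, hbn]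
  ring

private lemma natDegree_eval₂_monomial_le {F : Type*} [CommRing F] {m : ℕ}
    (b : Fin (m + 1) →₀ ℕ) (c : F) (Φ : Fin (m + 1) → Polynomial F)
    (hΦdeg : ∀ j, (Φ j).natDegree ≤ 1) :
    (MvPolynomial.eval₂ Polynomial.C Φ (MvPolynomial.monomial b c)).natDegree
      ≤ Finsupp.degree b := by
  have hsum : ∑ j, b j = Finsupp.degree b :=
    (Finset.sum_subset (Finset.subset_univ _)
      fun x _ hx => Finsupp.notMem_support_iff.mp hx).symm
  have hpow : ∀ j, ((Φ j) ^ (b j)).natDegree ≤ b j := fun j =>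
    Polynomial.natDegree_pow_le.trans (by simpa using Nat.mul_le_mul_left (b j) (hΦdeg j))
  rw [MvPolynomial.eval₂_monomial, Finsupp.prod_pow]
  calc (Polynomial.C c * ∏ j, Φ j ^ b j).natDegree
      ≤ (∏ j, Φ j ^ b j).natDegree := Polynomial.natDegree_C_mul_le c _
    _ ≤ ∑ j, (Φ j ^ b j).natDegree := Polynomial.natDegree_prod_le _ _
    _ ≤ ∑ j, b j := Finset.sum_le_sum fun j _ => hpow j
    _ = Finsupp.degree b := hsum

private lemma coeff_eval₂_monomial {F : Type*} [CommRing F] {m : ℕ} {d : ℕ}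
    (b : Fin (m + 1) →₀ ℕ) (c : F) (hb : Finsupp.degree b ≤ d)
    (Φ : Fin (m + 1) → Polynomial F) (w : Fin (m + 1) → F)
    (hΦdeg : ∀ j, (Φ j).natDegree ≤ 1) (hΦc : ∀ j, (Φ j).coeff 1 = w j) :
    (MvPolynomial.eval₂ Polynomial.C Φ (MvPolynomial.monomial b c)).coeff d
      = MvPolynomial.eval w (MvPolynomial.homogeneousComponent d (MvPolynomial.monomial b c)) := by
  classical
  have hsum : ∑ j, b j = Finsupp.degree b :=
    (Finset.sum_subset (Finset.subset_univ _)
      fun x _ hx => Finsupp.notMem_support_iff.mp hx).symm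
  have hpow : ∀ j, ((Φ j) ^ (b j)).natDegree ≤ b j := fun j =>
    Polynomial.natDegree_pow_le.trans (by simpa using Nat.mul_le_mul_left (b j) (hΦdeg j))
  have hcomp : MvPolynomial.homogeneousComponent d (MvPolynomial.monomial b c)
      = if Finsupp.degree b = d then MvPolynomial.monomial b c else 0 := by
    ext e
    rw [MvPolynomial.coeff_homogeneousComponent]
    by_cases he : e = b
    · subst he
      split_ifs <;> simp_all [MvPolynomial.coeff_monomial]
    · split_ifs <;> simp_all [MvPolynomial.coeff_monomial, Ne.symm he]
  by_cases hbd : Finsupp.degree b = d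
  · rw [hcomp, if_pos hbd, MvPolynomial.eval₂_monomial, Finsupp.prod_pow, ← hbd, ← hsum,
      Polynomial.coeff_C_mul, my_coeff_prod Finset.univ _ _ fun j _ => hpow j,
      MvPolynomial.eval_monomial, Finsupp.prod_pow]
    congr 1
    refine Finset.prod_congr rfl fun j _ => ?_
    have h5 : (Φ j ^ b j).coeff (b j) = (Φ j).coeff 1 ^ b j := by
      simpa using Polynomial.coeff_pow_of_natDegree_le (hΦdeg j) (m := b j)
    rw [h5, hΦc j]
  · rw [hcomp, if_neg hbd, map_zero]
    exact Polynomial.coeff_eq_zero_of_natDegree_lt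
      ((natDegree_eval₂_monomial_le b c Φ hΦdeg).trans_lt (lt_of_le_of_ne hb hbd))

private lemma coeff_eval₂_eq_eval_homogeneousComponent {F : Type*} [CommRing F] {m : ℕ}
    (d : ℕ) (Q : MvPolynomial (Fin (m + 1)) F) (hQ : Q.totalDegree ≤ d)
    (Φ : Fin (m + 1) → Polynomial F) (w : Fin (m + 1) → F)
    (hΦdeg : ∀ j, (Φ j).natDegree ≤ 1) (hΦc : ∀ j, (Φ j).coeff 1 = w j) :
    (MvPolynomial.eval₂ Polynomial.C Φ Q).coeff d
      = MvPolynomial.eval w (MvPolynomial.homogeneousComponent d Q) := by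
  conv_lhs => rw [Q.as_sum]
  conv_rhs => rw [Q.as_sum]
  rw [← MvPolynomial.coe_eval₂Hom, map_sum, Polynomial.finset_sum_coeff, map_sum, map_sum]
  refine Finset.sum_congr rfl fun b hb => ?_
  have hbd : Finsupp.degree b ≤ d := le_trans (MvPolynomial.le_totalDegree hb) hQ
  exact coeff_eval₂_monomial b _ hbd Φ w hΦdeg hΦc

theorem statement10 (K : ℕ) (hK : 1 ≤ K) :
    ∃ p₀ : ℕ, ∀ (F : Type) [Field F] [Fintype F],
      p₀ ≤ ringChar F →
      ∀ (m : ℕ), 1 ≤ m →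
      ∀ (P : Fin K → MvPolynomial (Fin (m + 1)) F),
        (∀ i, P i ≠ 0) → (∀ i, (P i).totalDegree ≤ K) →
      ∀ E : Set ((Fin m → F) × F),
        (E ⊆ ⋃ i, {x : (Fin m → F) × F | MvPolynomial.eval (Fin.snoc x.1 x.2) (P i) = 0}) →
        ¬ IsBesicovitch E := by
  classical
  refine ⟨K * K + 2, ?_⟩
  intro F _ _ hchar m hm P hP0 hPdeg E hE hB
  haveI : CharP F (ringChar F) := ringChar.charP F
  obtain ⟨nn, hprime, hcardeq⟩ := FiniteField.card F (ringChar F)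
  have hcard : K * K + 2 ≤ Fintype.card F :=
    le_trans hchar (by rw [hcardeq]; exact Nat.le_self_pow nn.ne_zero _)
  set Q : MvPolynomial (Fin (m + 1)) F := ∏ i, P i with hQdef
  have hQ0 : Q ≠ 0 := Finset.prod_ne_zero_iff.mpr fun i _ => hP0 i
  set d := Q.totalDegree with hd
  have hdK : d ≤ K * K := by
    refine le_trans (MvPolynomial.totalDegree_finset_prod _ _) ?_
    calc ∑ i : Fin K, (P i).totalDegree ≤ ∑ _i : Fin K, K :=
          Finset.sum_le_sum fun i _ => hPdeg i
      _ = K * K := by simp [Finset.sum_const, mul_comm]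
  have hvanish : ∀ p ∈ E, MvPolynomial.eval (Fin.snoc p.1 p.2) Q = 0 := by
    intro p hp
    obtain ⟨i, hi⟩ := Set.mem_iUnion.mp (hE hp)
    rw [hQdef, map_prod]
    exact Finset.prod_eq_zero (Finset.mem_univ i) hi
  -- the top homogeneous component of Q is nonzero
  have hH0 : MvPolynomial.homogeneousComponent d Q ≠ 0 := by
    obtain ⟨b, hb1, hb2⟩ := Finset.exists_mem_eq_sup Q.support
      (MvPolynomial.support_nonempty.mpr hQ0) fun s : Fin (m + 1) →₀ ℕ => s.sum fun _ e => e
    have hbdeg : Finsupp.degree b = d := by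
      rw [hd, MvPolynomial.totalDegree, hb2]; rfl
    intro h0
    have h2 : MvPolynomial.coeff b (MvPolynomial.homogeneousComponent d Q)
        = MvPolynomial.coeff b Q := by
      rw [MvPolynomial.coeff_homogeneousComponent, if_pos hbdeg]
    exact MvPolynomial.mem_support_iff.mp hb1 (by rw [← h2, h0, MvPolynomial.coeff_zero])
  -- the top homogeneous component vanishes at all (v, 1)
  have hHval : ∀ v : Fin m → F,
      MvPolynomial.eval (Fin.snoc v 1) (MvPolynomial.homogeneousComponent d Q) = 0 := by
    intro v
    obtain ⟨x₀, hx₀⟩ := hB v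
    set Φ : Fin (m + 1) → Polynomial F :=
      Fin.snoc (fun j => Polynomial.C (x₀ j) + Polynomial.C (v j) * Polynomial.X)
        Polynomial.X with hΦdef
    have hΦdeg : ∀ j, (Φ j).natDegree ≤ 1 := by
      intro j
      induction j using Fin.lastCases with
      | last => simpa [hΦdef] using Polynomial.natDegree_X_le
      | cast j =>
        simp only [hΦdef, Fin.snoc_castSucc]
        compute_degree
    have hΦc : ∀ j, (Φ j).coeff 1 = (Fin.snoc v 1 : Fin (m+1) → F) j := by
      intro j
      induction j using Fin.lastCases with
      | last => simp [hΦdef]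
      | cast j => simp [hΦdef, Polynomial.coeff_C]
    have heval : ∀ t : F, (MvPolynomial.eval₂ Polynomial.C Φ Q).eval t = 0 := by
      intro t
      have h1 := MvPolynomial.eval₂_comp_left (Polynomial.evalRingHom t) Polynomial.C Φ Q
      have h2 : (Polynomial.evalRingHom t).comp Polynomial.C = RingHom.id F := by
        ext a; simp
      have h3 : ⇑(Polynomial.evalRingHom t) ∘ Φ = Fin.snoc (x₀ + t • v) t := by
        funext i
        induction i using Fin.lastCases with
        | last => simp [hΦdef]
        | cast j =>
          simp only [hΦdef, Function.comp_apply, Fin.snoc_castSucc,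
            Polynomial.coe_evalRingHom, Polynomial.eval_add, Polynomial.eval_C,
            Polynomial.eval_mul, Polynomial.eval_X, Pi.add_apply, Pi.smul_apply,
            smul_eq_mul]
          ring
      rw [h2, h3] at h1
      have h4 : MvPolynomial.eval₂ (RingHom.id F) (Fin.snoc (x₀ + t • v) t) Q
          = MvPolynomial.eval (Fin.snoc (x₀ + t • v) t) Q := rfl
      rw [h4] at h1
      have h5 : MvPolynomial.eval (Fin.snoc (x₀ + t • v) t) Q = 0 :=
        hvanish (x₀ + t • v, t) (hx₀ ⟨t, rfl⟩)
      simpa [h5] using h1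
    have hdeg : (MvPolynomial.eval₂ Polynomial.C Φ Q).natDegree ≤ d := by
      conv_lhs => rw [Q.as_sum, ← MvPolynomial.coe_eval₂Hom, map_sum]
      refine Polynomial.natDegree_sum_le_of_forall_le _ _ fun b hb => ?_
      exact le_trans (natDegree_eval₂_monomial_le b _ Φ hΦdeg)
        (le_trans (MvPolynomial.le_totalDegree hb) (le_of_eq hd.symm))
    have hqv0 : MvPolynomial.eval₂ Polynomial.C Φ Q = 0 := by
      refine Polynomial.eq_zero_of_natDegree_lt_card_of_eval_eq_zero _
        Function.injective_id (fun t => heval t) ?_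
      exact lt_of_le_of_lt hdeg (lt_of_le_of_lt (by omega : d ≤ K * K + 1)
        (lt_of_lt_of_le (by omega) hcard))
    have hcoeff := coeff_eval₂_eq_eval_homogeneousComponent d Q (le_of_eq hd.symm)
      Φ (Fin.snoc v 1) hΦdeg hΦc
    rw [hqv0] at hcoeff
    simpa using hcoeff.symm
  -- multiply by the last variable: vanishes everywhere
  have hall : ∀ y : Fin (m + 1) → F,
      MvPolynomial.eval y
        (MvPolynomial.homogeneousComponent d Q * MvPolynomial.X (Fin.last m)) = 0 := by
    intro y
    rw [map_mul, MvPolynomial.eval_X]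
    by_cases hy : y (Fin.last m) = 0
    · rw [hy, mul_zero]
    · set c := y (Fin.last m) with hc
      set u : Fin m → F := fun j => y (Fin.castSucc j) * c⁻¹ with hu
      have hscale := eval_mul_of_isHomogeneous
        (MvPolynomial.homogeneousComponent_isHomogeneous d Q) c (Fin.snoc u 1)
      have hyw : (fun i => c * (Fin.snoc u 1 : Fin (m+1) → F) i) = y := by
        funext i
        induction i using Fin.lastCases with
        | last => simp [hc]
        | cast j =>
          simp only [Fin.snoc_castSucc, hu]
          field_simp
      rw [hyw, hHval u] at hscale
      rw [hscale, mul_zero, zero_mul]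
  have hmul0 : MvPolynomial.homogeneousComponent d Q * MvPolynomial.X (Fin.last m) = 0 := by
    refine MvPolynomial.IsHomogeneous.eq_zero_of_forall_eval_eq_zero_of_le_card
      ((MvPolynomial.homogeneousComponent_isHomogeneous d Q).mul
        (MvPolynomial.isHomogeneous_X _ _)) hall ?_
    rw [Cardinal.mk_fintype]
    exact_mod_cast Nat.cast_le.mpr (by omega : d + 1 ≤ Fintype.card F)
  rcases mul_eq_zero.mp hmul0 with h | h
  · exact hH0 h
  · exact MvPolynomial.X_ne_zero _ h
end

section
/- Let F be a finite field of odd characteristic and let E := {(x, t) ∈ F² : x + t² = s² for some s ∈ F}. Then E is a Besicovitch set in F² — indeed for every v ∈ F the line l(v²/4, v) = {(v²/4 + tv, t) : t ∈ F} is contained in E — and |E| = (|F|² + |F|)/2. -/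
open scoped BigOperators

open Finset in
lemma two_mul_card_sq_image {F : Type*} [Field F] [Fintype F] [DecidableEq F]
    (hchar : ringChar F ≠ 2) :
    2 * (Finset.univ.image (fun x : F => x ^ 2)).card = Fintype.card F + 1 := by
  have h2 : (2 : F) ≠ 0 := Ring.two_ne_zero hchar
  classical
  set s := Finset.univ.image (fun x : F => x ^ 2) with hs
  have h0 : (0 : F) ∈ s := by
    simp only [hs, mem_image, mem_univ, true_and]
    exact ⟨0, by ring⟩
  have hcard : Fintype.card F = ∑ b ∈ s, (Finset.univ.filter (fun x : F => x ^ 2 = b)).card := by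
    rw [← Finset.card_univ]
    exact Finset.card_eq_sum_card_image _ _
  have hfib : ∀ b ∈ s, (Finset.univ.filter (fun x : F => x ^ 2 = b)).card
      = if b = 0 then 1 else 2 := by
    intro b hb
    simp only [hs, mem_image, mem_univ, true_and] at hb
    obtain ⟨c, rfl⟩ := hb
    by_cases hc : c = 0
    · subst hc
      rw [if_pos (by ring : (0:F)^2 = 0)]
      rw [show Finset.univ.filter (fun x : F => x ^ 2 = 0 ^ 2) = {0} by
        ext x; simp [pow_eq_zero_iff]]
      simp
    · rw [if_neg (by simpa using pow_ne_zero 2 hc)]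
      rw [show Finset.univ.filter (fun x : F => x ^ 2 = c ^ 2) = {c, -c} by
        ext x
        simp only [mem_filter, mem_univ, true_and, mem_insert, mem_singleton]
        constructor
        · intro h
          have hz : (x - c) * (x + c) = 0 := by linear_combination h
          rcases mul_eq_zero.mp hz with h' | h'
          · exact Or.inl (sub_eq_zero.mp h')
          · exact Or.inr (eq_neg_of_add_eq_zero_left h')
        · rintro (rfl | rfl) <;> ring]
      rw [Finset.card_insert_of_notMem (by
        simp only [mem_singleton]
        intro h
        exact hc (by
          have : (2 : F) * c = 0 := by linear_combination h
          exact (mul_eq_zero.mp this).resolve_left h2))]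
      simp
  rw [Finset.sum_congr rfl hfib] at hcard
  rw [← Finset.add_sum_erase s _ h0] at hcard
  rw [if_pos rfl] at hcard
  rw [Finset.sum_congr rfl (fun b hb => if_neg (Finset.ne_of_mem_erase hb))] at hcard
  rw [Finset.sum_const, smul_eq_mul, Finset.card_erase_of_mem h0] at hcard
  have hpos : 1 ≤ s.card := Finset.card_pos.mpr ⟨0, h0⟩
  omega

theorem statement11 {F : Type*} [Field F] [Fintype F] (hchar : ringChar F ≠ 2) :
    (∀ v : Fin 1 → F, lineSet (fun i => (v i) ^ 2 / 4) v ⊆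
        {p : (Fin 1 → F) × F | ∃ s : F, p.1 0 + p.2 ^ 2 = s ^ 2}) ∧
    IsBesicovitch {p : (Fin 1 → F) × F | ∃ s : F, p.1 0 + p.2 ^ 2 = s ^ 2} ∧
    2 * Nat.card {p : (Fin 1 → F) × F | ∃ s : F, p.1 0 + p.2 ^ 2 = s ^ 2} =
      Fintype.card F ^ 2 + Fintype.card F := by
  classical
  have h2 : (2 : F) ≠ 0 := Ring.two_ne_zero hchar
  have h4 : (4 : F) ≠ 0 := by
    intro h
    exact h2 (by
      have : (2 : F) * 2 = 0 := by linear_combination h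
      exact (mul_eq_zero.mp this).elim id id)
  have part1 : ∀ v : Fin 1 → F, lineSet (fun i => (v i) ^ 2 / 4) v ⊆
      {p : (Fin 1 → F) × F | ∃ s : F, p.1 0 + p.2 ^ 2 = s ^ 2} := by
    intro v p hp
    obtain ⟨t, rfl⟩ := hp
    refine ⟨v 0 / 2 + t, ?_⟩
    show (v 0) ^ 2 / 4 + t * v 0 + t ^ 2 = (v 0 / 2 + t) ^ 2
    field_simp
    ring
  refine ⟨part1, fun v => ⟨_, part1 v⟩, ?_⟩
  -- counting
  have e : {p : (Fin 1 → F) × F | ∃ s : F, p.1 0 + p.2 ^ 2 = s ^ 2} ≃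
      {y : F // ∃ s : F, y = s ^ 2} × F :=
    { toFun := fun p => (⟨p.1.1 0 + p.1.2 ^ 2, p.2⟩, p.1.2)
      invFun := fun q => ⟨((fun _ => q.1.1 - q.2 ^ 2), q.2), by
        obtain ⟨s, hs⟩ := q.1.2
        exact ⟨s, by linear_combination hs⟩⟩
      left_inv := fun p => by
        apply Subtype.ext
        apply Prod.ext
        · funext i
          rw [Subsingleton.elim i 0]
          show p.1.1 0 + p.1.2 ^ 2 - p.1.2 ^ 2 = p.1.1 0
          ring
        · rfl
      right_inv := fun q => by
        apply Prod.ext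
        · apply Subtype.ext
          show q.1.1 - q.2 ^ 2 + q.2 ^ 2 = q.1.1
          ring
        · rfl }
  have hS : Nat.card {y : F // ∃ s : F, y = s ^ 2}
      = (Finset.univ.image (fun x : F => x ^ 2)).card := by
    rw [Nat.card_eq_fintype_card, Fintype.card_subtype]
    congr 1
    ext y
    simp [eq_comm]
  have hkey : Nat.card {p : (Fin 1 → F) × F | ∃ s : F, p.1 0 + p.2 ^ 2 = s ^ 2}
      = (Finset.univ.image (fun x : F => x ^ 2)).card * Fintype.card F := by
    rw [Nat.card_congr e, Nat.card_prod, hS, Nat.card_eq_fintype_card]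
  rw [hkey]
  have := two_mul_card_sq_image (F := F) hchar
  nlinarith [this]
end

section
/- Let n ≥ 2 and let F be a finite field. Then for every f : F^n → ℂ one has (|F|^{1−n} Σ_{v∈F^{n−1}} f*(v)^{2n−2})^{1/(2n−2)} ≤ √2 · (Σ_{x∈F^n} |f(x)|²)^{1/2}; that is, the Kakeya maximal operator satisfies K(2 → 2n−2) ≤ √2. -/
open scoped BigOperators

open Finset



/-- Hölder: `(∑ a^(k-1))^k ≤ card • (∑ a^k)^(k-1)`. -/
lemma holder_aux {ι : Type*} [Fintype ι] (a : ι → ℝ) (ha : ∀ v, 0 ≤ a v) (k : ℕ) (hk : 2 ≤ k) :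
    (∑ v, a v ^ (k - 1)) ^ k ≤ (Fintype.card ι : ℝ) * (∑ v, a v ^ k) ^ (k - 1) := by
  set q : ℝ := (k : ℝ) with hq
  have hq1 : 1 < q := by rw [hq]; exact_mod_cast (by omega : 1 < k)
  have hq0 : (0:ℝ) < q := lt_trans one_pos hq1
  have hqm1 : (0:ℝ) < q - 1 := by linarith
  have hpq : Real.HolderConjugate (q / (q - 1)) q := (Real.HolderConjugate.conjExponent hq1).symm
  have hS : (0:ℝ) ≤ ∑ v, a v ^ k := sum_nonneg fun v _ => pow_nonneg (ha v) _
  have hcast : ((k - 1 : ℕ) : ℝ) = q - 1 := by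
    rw [Nat.cast_sub (le_trans one_le_two hk)]; simp [hq]
  have hH := Real.inner_le_Lp_mul_Lq_of_nonneg (s := Finset.univ)
    (f := fun v => a v ^ (k - 1)) (g := fun _ => (1:ℝ)) hpq
    (fun i _ => pow_nonneg (ha i) _) (fun i _ => zero_le_one)
  simp only [mul_one, Real.one_rpow, sum_const, card_univ, nsmul_eq_mul] at hH
  have e1 : ∀ v : ι, ((a v ^ (k - 1) : ℝ)) ^ (q / (q - 1)) = a v ^ k := by
    intro v
    rw [← Real.rpow_natCast (a v) (k - 1), ← Real.rpow_mul (ha v), hcast,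
      mul_div_cancel₀ _ (ne_of_gt hqm1)]
    · exact Real.rpow_natCast (a v) k
  rw [show (1 / (q / (q - 1))) = (q - 1) / q by rw [one_div_div]] at hH
  simp only [e1] at hH
  -- hH : ∑ a^(k-1) ≤ (∑ a^k) ^ ((q-1)/q) * card ^ (1/q)
  have hT : (0:ℝ) ≤ ∑ v, a v ^ (k - 1) := sum_nonneg fun v _ => pow_nonneg (ha v) _
  have h2 := pow_le_pow_left₀ hT hH k
  refine h2.trans_eq ?_
  rw [mul_pow, ← Real.rpow_natCast ((∑ v, a v ^ k) ^ ((q - 1) / q)) k,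
    ← Real.rpow_natCast (((Fintype.card ι : ℝ)) ^ (1 / q)) k,
    ← Real.rpow_mul hS, ← Real.rpow_mul (Nat.cast_nonneg _),
    div_mul_cancel₀ _ (ne_of_gt hq0), one_div, inv_mul_cancel₀ (ne_of_gt hq0),
    Real.rpow_one, ← hcast, Real.rpow_natCast, mul_comm]


lemma powsum_aux {ι : Type*} [Fintype ι] [Nonempty ι] (a : ι → ℝ) (ha : ∀ v, 0 ≤ a v)
    (m : ℕ) (hm : 1 ≤ m) :
    (∑ v, a v ^ (4 * m - 2)) ^ m ≤ (∑ v, a v ^ (2 * m)) ^ (2 * m - 1) := by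
  obtain ⟨m', rfl⟩ : ∃ m', m = m' + 1 := ⟨m - 1, by omega⟩
  obtain ⟨w, hw⟩ := Finite.exists_max a
  set S := ∑ v, a v ^ (2 * (m' + 1)) with hSdef
  have hS0 : (0:ℝ) ≤ S := sum_nonneg fun v _ => pow_nonneg (ha v) _
  have hwS : a w ^ (2 * (m' + 1)) ≤ S :=
    Finset.single_le_sum (fun i _ => pow_nonneg (ha i) _) (mem_univ w)
  have step1 : ∑ v, a v ^ (4 * (m' + 1) - 2) ≤ S * a w ^ (2 * m') := by
    rw [hSdef, sum_mul]
    refine sum_le_sum fun v _ => ?_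
    calc a v ^ (4 * (m' + 1) - 2) = a v ^ (2 * (m' + 1)) * a v ^ (2 * m') := by
          rw [← pow_add]; congr 1; omega
      _ ≤ a v ^ (2 * (m' + 1)) * a w ^ (2 * m') :=
          mul_le_mul_of_nonneg_left (pow_le_pow_left₀ (ha v) (hw v) _)
            (pow_nonneg (ha v) _)
  calc (∑ v, a v ^ (4 * (m' + 1) - 2)) ^ (m' + 1)
      ≤ (S * a w ^ (2 * m')) ^ (m' + 1) :=
        pow_le_pow_left₀ (sum_nonneg fun v _ => pow_nonneg (ha v) _) step1 _
    _ = S ^ (m' + 1) * (a w ^ (2 * (m' + 1))) ^ m' := by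
        rw [mul_pow, ← pow_mul, ← pow_mul]; ring_nf
    _ ≤ S ^ (m' + 1) * S ^ m' :=
        mul_le_mul_of_nonneg_left (pow_le_pow_left₀ (pow_nonneg (ha w) _) hwS _)
          (pow_nonneg hS0 _)
    _ = S ^ (2 * (m' + 1) - 1) := by rw [← pow_add]; congr 1; omega

/-- The Kakeya maximal function `f*(v) = max_{x₀} ∑_{x ∈ l(x₀,v)} |f(x)|`. -/
noncomputable def kakMax {F : Type*} [Field F] [Fintype F] {m : ℕ}
    (f : (Fin m → F) × F → ℂ) (v : Fin m → F) : ℝ :=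
  ⨆ x₀ : Fin m → F, ∑ t : F, ‖f (x₀ + t • v, t)‖

theorem statement12 {F : Type*} [Field F] [Fintype F] (m : ℕ) (hm : 1 ≤ m)
    (f : (Fin m → F) × F → ℂ) :
    ((Fintype.card F : ℝ) ^ (-(m : ℝ)) *
        ∑ v : Fin m → F, kakMax f v ^ ((2 * m : ℕ) : ℝ)) ^ (1 / ((2 * m : ℕ) : ℝ)) ≤
      Real.sqrt 2 * (∑ x : (Fin m → F) × F, ‖f x‖ ^ (2 : ℝ)) ^ ((1 : ℝ) / 2) := by
  classical
  haveI : Nonempty F := ⟨1⟩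
  -- maximizing starting points
  have hsel : ∀ v : Fin m → F, ∃ x₀ : Fin m → F,
      (∑ t : F, ‖f (x₀ + t • v, t)‖) = kakMax f v :=
    fun v => exists_eq_ciSup_of_finite
  choose x₀ hx₀ using hsel
  have ha0 : ∀ v, 0 ≤ kakMax f v := by
    intro v
    rw [← hx₀ v]
    exact sum_nonneg fun t _ => norm_nonneg _
  -- the lines as finsets
  set L : (Fin m → F) → Finset ((Fin m → F) × F) :=
    fun v => Finset.univ.image (fun t : F => (x₀ v + t • v, t)) with hL
  have hmemL : ∀ v (p : (Fin m → F) × F), p ∈ L v ↔ p.1 = x₀ v + p.2 • v := by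
    intro v p
    simp only [hL, Finset.mem_image, Finset.mem_univ, true_and]
    constructor
    · rintro ⟨t, rfl⟩; rfl
    · intro h; exact ⟨p.2, Prod.ext h.symm rfl⟩
  have hLa : ∀ v, ∑ p ∈ L v, ‖f p‖ = kakMax f v := by
    intro v
    rw [hL, Finset.sum_image (fun t _ t' _ h => (congrArg Prod.snd h : t = t'))]
    exact hx₀ v
  have hLcard : ∀ v, ((L v).card : ℝ) ≤ (Fintype.card F : ℝ) := by
    intro v
    exact_mod_cast (Finset.card_image_le.trans (le_of_eq (Finset.card_univ)))
  have hLint : ∀ v w, v ≠ w → (((L v ∩ L w).card : ℝ)) ≤ 1 := by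
    intro v w hvw
    have : (L v ∩ L w).card ≤ 1 := by
      rw [Finset.card_le_one]
      intro p hp q hq
      rw [Finset.mem_inter, hmemL, hmemL] at hp hq
      obtain ⟨i, hi⟩ := Function.ne_iff.mp hvw
      have e1 := congrFun hp.1 i
      have e2 := congrFun hp.2 i
      have e3 := congrFun hq.1 i
      have e4 := congrFun hq.2 i
      simp only [Pi.add_apply, Pi.smul_apply, smul_eq_mul] at e1 e2 e3 e4
      have h2 : p.2 = q.2 := by
        have key : p.2 * (v i - w i) = q.2 * (v i - w i) := by
          linear_combination e2 - e1 + e3 - e4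
        exact mul_right_cancel₀ (sub_ne_zero.mpr hi) key
      have h1 : p.1 = q.1 := by rw [hp.1, hq.1, h2]
      exact Prod.ext h1 h2
    exact_mod_cast this
  -- notation
  set g : (Fin m → F) → ℝ := fun v => kakMax f v ^ (2 * m - 1) with hg
  set S : ℝ := ∑ v, kakMax f v ^ (2 * m) with hSdef
  set E : ℝ := ∑ x : (Fin m → F) × F, ‖f x‖ ^ 2 with hEdef
  have hg0 : ∀ v, 0 ≤ g v := fun v => pow_nonneg (ha0 v) _
  have hS0 : 0 ≤ S := sum_nonneg fun v _ => pow_nonneg (ha0 v) _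
  have hE0 : 0 ≤ E := sum_nonneg fun x _ => pow_nonneg (norm_nonneg _) _
  set hfn : ((Fin m → F) × F) → ℝ :=
    fun x => ∑ v, g v * (if x ∈ L v then (1:ℝ) else 0) with hhfn
  have hSh : S = ∑ x : (Fin m → F) × F, ‖f x‖ * hfn x := by
    have e0 : S = ∑ v, g v * kakMax f v := by
      rw [hSdef]
      refine sum_congr rfl fun v _ => ?_
      rw [hg, ← pow_succ]
      congr 1
      omega
    rw [e0]
    calc ∑ v, g v * kakMax f v
        = ∑ v, ∑ x : (Fin m → F) × F, g v * (‖f x‖ * (if x ∈ L v then (1:ℝ) else 0)) := by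
          refine sum_congr rfl fun v _ => ?_
          rw [← mul_sum]
          congr 1
          rw [← hLa v, ← Finset.univ_inter (L v), ← Finset.sum_ite_mem]
          refine sum_congr rfl fun x _ => ?_
          by_cases hx : x ∈ L v <;> simp [hx]
      _ = ∑ x : (Fin m → F) × F, ‖f x‖ * hfn x := by
          rw [Finset.sum_comm]
          refine sum_congr rfl fun x _ => ?_
          rw [hhfn, mul_sum]
          refine sum_congr rfl fun v _ => ?_
          ring
  set H : ℝ := ∑ x : (Fin m → F) × F, hfn x ^ 2 with hHdef
  have hCS : S ^ 2 ≤ E * H := by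
    rw [hSh, hEdef, hHdef]
    exact Finset.sum_mul_sq_le_sq_mul_sq Finset.univ _ _
  have hHexp : H = ∑ v, ∑ w, g v * g w * ((L v ∩ L w).card : ℝ) := by
    rw [hHdef]
    have e1 : ∀ x : (Fin m → F) × F, hfn x ^ 2 =
        ∑ v, ∑ w, (g v * g w) * ((if x ∈ L v then (1:ℝ) else 0) * (if x ∈ L w then (1:ℝ) else 0)) := by
      intro x
      rw [hhfn, sq, Finset.sum_mul_sum]
      refine sum_congr rfl fun v _ => sum_congr rfl fun w _ => by ring
    simp only [e1]
    rw [Finset.sum_comm]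
    refine sum_congr rfl fun v _ => ?_
    rw [Finset.sum_comm]
    refine sum_congr rfl fun w _ => ?_
    rw [← mul_sum]
    congr 1
    have e2 : ∀ x : (Fin m → F) × F,
        (if x ∈ L v then (1:ℝ) else 0) * (if x ∈ L w then (1:ℝ) else 0)
          = (if x ∈ L v ∩ L w then (1:ℝ) else 0) := by
      intro x
      by_cases h1 : x ∈ L v <;> by_cases h2 : x ∈ L w <;> simp [h1, h2, Finset.mem_inter]
    simp only [e2]
    rw [Finset.sum_ite_mem, Finset.univ_inter]
    simp
  have hHle : H ≤ (∑ v, g v) ^ 2 + (Fintype.card F : ℝ) * ∑ v, g v ^ 2 := by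
    rw [hHexp]
    calc ∑ v, ∑ w, g v * g w * ((L v ∩ L w).card : ℝ)
        ≤ ∑ v, ∑ w, g v * g w * (if v = w then (Fintype.card F : ℝ) else 1) := by
          refine sum_le_sum fun v _ => sum_le_sum fun w _ => ?_
          refine mul_le_mul_of_nonneg_left ?_ (mul_nonneg (hg0 v) (hg0 w))
          split_ifs with h
          · subst h
            rw [Finset.inter_self]
            exact hLcard v
          · exact hLint v w h
      _ = ∑ v, ∑ w, (g v * g w + (if v = w then g v * g w * ((Fintype.card F : ℝ) - 1) else 0)) := by
          refine sum_congr rfl fun v _ => sum_congr rfl fun w _ => ?_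
          split_ifs <;> ring
      _ = (∑ v, g v) ^ 2 + ((Fintype.card F : ℝ) - 1) * ∑ v, g v ^ 2 := by
          simp only [Finset.sum_add_distrib, Finset.sum_ite_eq, Finset.mem_univ, if_true]
          rw [sq (∑ v, g v), Finset.sum_mul_sum, mul_sum]
          congr 1
          refine sum_congr rfl fun v _ => by ring
      _ ≤ (∑ v, g v) ^ 2 + (Fintype.card F : ℝ) * ∑ v, g v ^ 2 := by
          have h1 : (0:ℝ) ≤ ∑ v, g v ^ 2 := sum_nonneg fun v _ => sq_nonneg _
          nlinarith [h1]
  have hQ0 : (0:ℝ) < (Fintype.card F : ℝ) := by exact_mod_cast Fintype.card_pos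
  have hN : (Fintype.card (Fin m → F) : ℝ) = (Fintype.card F : ℝ) ^ m := by
    rw [Fintype.card_fun]
    push_cast
    simp
  have hHolder : (∑ v, g v) ^ (2 * m) ≤ (Fintype.card F : ℝ) ^ m * S ^ (2 * m - 1) := by
    have h := holder_aux (fun v => kakMax f v) ha0 (2 * m) (by omega)
    rw [hN] at h
    exact h
  have hPow2 : (∑ v, g v ^ 2) ^ m ≤ S ^ (2 * m - 1) := by
    have e : ∀ v : Fin m → F, g v ^ 2 = kakMax f v ^ (4 * m - 2) := by
      intro v
      rw [hg]
      dsimp only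
      rw [← pow_mul]
      congr 1
      omega
    simp only [e]
    exact powsum_aux _ ha0 m hm
  have hHm : H ^ m ≤ 2 ^ m * (Fintype.card F : ℝ) ^ m * S ^ (2 * m - 1) := by
    have hH0 : 0 ≤ H := sum_nonneg fun x _ => sq_nonneg _
    have hgsq0 : (0:ℝ) ≤ ∑ v, g v ^ 2 := sum_nonneg fun v _ => sq_nonneg _
    calc H ^ m ≤ ((∑ v, g v) ^ 2 + (Fintype.card F : ℝ) * ∑ v, g v ^ 2) ^ m :=
          pow_le_pow_left₀ hH0 hHle m
      _ ≤ 2 ^ (m - 1) * ((((∑ v, g v) ^ 2) ^ m) + (((Fintype.card F : ℝ) * ∑ v, g v ^ 2) ^ m)) :=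
          add_pow_le (sq_nonneg _) (mul_nonneg hQ0.le hgsq0) m
      _ ≤ 2 ^ (m - 1) * (((Fintype.card F : ℝ) ^ m * S ^ (2 * m - 1))
            + ((Fintype.card F : ℝ) ^ m * S ^ (2 * m - 1))) := by
          refine mul_le_mul_of_nonneg_left (add_le_add ?_ ?_) (by positivity)
          · rw [← pow_mul]
            exact hHolder
          · rw [mul_pow]
            exact mul_le_mul_of_nonneg_left hPow2 (pow_nonneg hQ0.le m)
      _ = 2 ^ m * (Fintype.card F : ℝ) ^ m * S ^ (2 * m - 1) := by
          have : (2:ℝ) ^ m = 2 ^ (m - 1) * 2 := by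
            rw [← pow_succ]
            congr 1
            omega
          rw [this]
          ring
  have hmain : S ≤ 2 ^ m * (Fintype.card F : ℝ) ^ m * E ^ m := by
    have h1 : S ^ (2 * m) ≤ (2 ^ m * (Fintype.card F : ℝ) ^ m * E ^ m) * S ^ (2 * m - 1) := by
      calc S ^ (2 * m) = (S ^ 2) ^ m := by rw [← pow_mul]
        _ ≤ (E * H) ^ m := pow_le_pow_left₀ (sq_nonneg S) hCS m
        _ = E ^ m * H ^ m := mul_pow _ _ _
        _ ≤ E ^ m * (2 ^ m * (Fintype.card F : ℝ) ^ m * S ^ (2 * m - 1)) :=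
            mul_le_mul_of_nonneg_left hHm (pow_nonneg hE0 m)
        _ = (2 ^ m * (Fintype.card F : ℝ) ^ m * E ^ m) * S ^ (2 * m - 1) := by ring
    rcases hS0.eq_or_lt with h | h
    · rw [← h]
      positivity
    · have h2 : S * S ^ (2 * m - 1) ≤ (2 ^ m * (Fintype.card F : ℝ) ^ m * E ^ m) * S ^ (2 * m - 1) := by
        calc S * S ^ (2 * m - 1) = S ^ (2 * m) := by
              rw [mul_comm, ← pow_succ]
              congr 1
              omega
          _ ≤ _ := h1
      exact le_of_mul_le_mul_right h2 (pow_pos h (2 * m - 1))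
  -- final conversion to rpow form
  have hLHSsum : ∑ v, kakMax f v ^ ((2 * m : ℕ) : ℝ) = S := by
    rw [hSdef]
    exact sum_congr rfl fun v _ => Real.rpow_natCast _ _
  have hE' : ∑ x : (Fin m → F) × F, ‖f x‖ ^ (2 : ℝ) = E := by
    rw [hEdef]
    exact sum_congr rfl fun x _ => Real.rpow_two _
  rw [hLHSsum, hE']
  have hQm : (Fintype.card F : ℝ) ^ (-(m : ℝ)) = ((Fintype.card F : ℝ) ^ m)⁻¹ := by
    rw [Real.rpow_neg hQ0.le, Real.rpow_natCast]
  rw [hQm]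
  have hbase : ((Fintype.card F : ℝ) ^ m)⁻¹ * S ≤ (2 * E) ^ m := by
    rw [inv_mul_le_iff₀ (pow_pos hQ0 m)]
    calc S ≤ 2 ^ m * (Fintype.card F : ℝ) ^ m * E ^ m := hmain
      _ = (Fintype.card F : ℝ) ^ m * (2 * E) ^ m := by rw [mul_pow]; ring
  have hnn : (0:ℝ) ≤ ((Fintype.card F : ℝ) ^ m)⁻¹ * S :=
    mul_nonneg (inv_nonneg.mpr (pow_nonneg hQ0.le m)) hS0
  calc (((Fintype.card F : ℝ) ^ m)⁻¹ * S) ^ (1 / ((2 * m : ℕ) : ℝ))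
      ≤ ((2 * E) ^ m) ^ (1 / ((2 * m : ℕ) : ℝ)) :=
        Real.rpow_le_rpow hnn hbase (by positivity)
    _ = Real.sqrt 2 * E ^ ((1:ℝ) / 2) := by
        rw [← Real.rpow_natCast (2 * E) m, ← Real.rpow_mul (by positivity)]
        have hexp : (m : ℝ) * (1 / ((2 * m : ℕ) : ℝ)) = 1 / 2 := by
          have hm0 : (m : ℝ) ≠ 0 := Nat.cast_ne_zero.mpr (by omega)
          push_cast
          field_simp
        rw [hexp, Real.mul_rpow zero_le_two hE0, ← Real.sqrt_eq_rpow]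
end

section
/- Let n ≥ 2, let F be a finite field, let P be a finite set of points in F^n, and let L be a finite set of lines in F^n. Let C₁ ≥ 1 and suppose L obeys the Wolff axiom with constant C₁: every 2-dimensional affine subspace of F^n contains at most C₁|F| lines of L. Then there is a constant C depending only on C₁ such that #{(p, ℓ) ∈ P × L : p ∈ ℓ} ≤ C (|P|^{1/2} |L|^{3/4} |F|^{1/4} + |P| + |L|). -/
/-!
Let `I` be the number of incidences and assume `I ≫ |P| + |L|`. Discard the lines carrying fewer
than an eighth of the average `I / |L|` incidences, then the points on fewer than an eighth of the
average number of surviving lines. Some surviving line `ℓ₀` contains a set `K` of surviving points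
with `|K| ≳ I / |L|`, and through them pass `|H| ≳ |K| I / |P|` surviving lines other than `ℓ₀`,
each with `a ≳ I / |L|` points off `ℓ₀`. Sort these lines by the plane they span with `ℓ₀`. One
plane holds at most `C₁ |F|` of them (Wolff), and as two lines share at most one point, `t` lines
with `a` points each cover `≳ a · min t a` points; distinct planes through `ℓ₀` are disjoint off
`ℓ₀`. Hence `|H| a² ≲ C₁ |F| |P|`, and altogether `I⁴ ≲ C₁ |P|² |L|³ |F|`.
-/

open scoped BigOperators

/-- A line in `F^n`: a one-dimensional affine subspace, i.e. `{a + t • b : t ∈ F}` with `b ≠ 0`. -/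
def IsLine {F : Type*} [Field F] {n : ℕ} (ℓ : Set (Fin n → F)) : Prop :=
  ∃ a b : Fin n → F, b ≠ 0 ∧ ℓ = {p | ∃ t : F, p = a + t • b}

/-- A 2-dimensional affine subspace (plane) in `F^n`. -/
def IsPlane {F : Type*} [Field F] {n : ℕ} (π : Set (Fin n → F)) : Prop :=
  ∃ a b c : Fin n → F, LinearIndependent F ![b, c] ∧
    π = {p | ∃ s t : F, p = a + s • b + t • c}

open AffineSubspace (mk')

section Span

variable {F V : Type*} [Field F] [AddCommGroup V] [Module F V]

theorem span_singleton_eq_of_mem {b v : V} (hv : v ∈ F ∙ b) (hv0 : v ≠ 0) :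
    F ∙ v = F ∙ b := by
  obtain ⟨t, rfl⟩ := Submodule.mem_span_singleton.mp hv
  have ht : t ≠ 0 := by rintro rfl; simp at hv0
  exact Submodule.span_singleton_smul_eq (IsUnit.mk0 t ht) b

theorem span_pair_eq_of_mem_of_notMem {b d v : V} (hv : v ∈ Submodule.span F {b, d})
    (hvb : v ∉ F ∙ b) : Submodule.span F {b, d} = Submodule.span F {b, v} := by
  refine le_antisymm (Submodule.span_le.mpr ?_) (Submodule.span_le.mpr ?_)
  · rintro x (rfl | rfl)
    · exact Submodule.subset_span (by simp)
    · rw [Set.pair_comm] at hv ⊢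
      exact mem_span_insert_exchange hv hvb
  · rintro x (rfl | rfl)
    · exact Submodule.subset_span (by simp)
    · exact hv

end Span

section Geometry

variable {F : Type*} [Field F] {n : ℕ}

theorem IsLine.exists_eq_mk' {ℓ : Set (Fin n → F)} (hℓ : IsLine ℓ) :
    ∃ a b : Fin n → F, b ≠ 0 ∧ ℓ = mk' a (F ∙ b) := by
  obtain ⟨a, b, hb, rfl⟩ := hℓ
  refine ⟨a, b, hb, Set.ext fun x => ?_⟩
  simp only [Set.mem_ofPred_eq, SetLike.mem_coe, AffineSubspace.mem_mk', vsub_eq_sub,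
    Submodule.mem_span_singleton, eq_sub_iff_add_eq, eq_comm (a := x), add_comm a]

theorem IsLine.exists_eq_mk'_of_mem {ℓ : Set (Fin n → F)} (hℓ : IsLine ℓ) {p : Fin n → F}
    (hp : p ∈ ℓ) : ∃ b : Fin n → F, b ≠ 0 ∧ ℓ = mk' p (F ∙ b) := by
  obtain ⟨a, b, hb, rfl⟩ := hℓ.exists_eq_mk'
  refine ⟨b, hb, ?_⟩
  rw [← AffineSubspace.mk'_eq hp, AffineSubspace.direction_mk']

theorem IsLine.inter_subsingleton {ℓ ℓ' : Set (Fin n → F)} (hℓ : IsLine ℓ) (hℓ' : IsLine ℓ')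
    (hne : ℓ ≠ ℓ') : (ℓ ∩ ℓ').Subsingleton := by
  rintro p ⟨hp, hp'⟩ q ⟨hq, hq'⟩
  by_contra hpq
  obtain ⟨b, -, rfl⟩ := hℓ.exists_eq_mk'_of_mem hp
  obtain ⟨b', -, rfl⟩ := hℓ'.exists_eq_mk'_of_mem hp'
  have hqp : q - p ≠ 0 := sub_ne_zero.mpr (Ne.symm hpq)
  apply hne
  rw [← span_singleton_eq_of_mem (AffineSubspace.mem_mk'.mp hq) hqp,
    ← span_singleton_eq_of_mem (AffineSubspace.mem_mk'.mp hq') hqp]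

theorem IsLine.card_filter_mem_le [Fintype F] {ℓ : Set (Fin n → F)} (hℓ : IsLine ℓ)
    (A : Finset (Fin n → F)) [DecidablePred (· ∈ ℓ)] :
    (A.filter (· ∈ ℓ)).card ≤ Fintype.card F := by
  classical
  obtain ⟨a, b, -, rfl⟩ := hℓ
  calc (A.filter (· ∈ {p : Fin n → F | ∃ t : F, p = a + t • b})).card
      ≤ (Finset.univ.image fun t : F => a + t • b).card := by
        refine Finset.card_le_card fun x hx => ?_
        obtain ⟨t, rfl⟩ := (Finset.mem_filter.mp hx).2
        exact Finset.mem_image_of_mem _ (Finset.mem_univ t)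
    _ ≤ Fintype.card F := Finset.card_image_le

theorem isPlane_mk'_span_pair (a : Fin n → F) {b c : Fin n → F}
    (hbc : LinearIndependent F ![b, c]) :
    IsPlane (mk' a (Submodule.span F {b, c}) : Set (Fin n → F)) := by
  refine ⟨a, b, c, hbc, Set.ext fun x => ?_⟩
  simp only [SetLike.mem_coe, AffineSubspace.mem_mk', vsub_eq_sub, Submodule.mem_span_pair,
    Set.mem_ofPred_eq, eq_sub_iff_add_eq', add_assoc, eq_comm (a := x)]

end Geometry

section Combinatorics

variable {ι α : Type*} [DecidableEq ι] [DecidableEq α] {f : ι → Finset α} {a : ℕ}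

/-- Greedy count: the `k`-th set meets the earlier ones in at most `k` points, so it adds at least
`a - k` new ones, and `∑_{k < t} (a - k) = t (2a + 1 - t) / 2`. -/
theorem card_mul_sub_le_two_mul_card_biUnion {S : Finset ι} (hS : S.card ≤ a)
    (hf : ∀ i ∈ S, a ≤ (f i).card)
    (hpair : (S : Set ι).Pairwise fun i j => (f i ∩ f j).card ≤ 1) :
    S.card * (2 * a + 1 - S.card) ≤ 2 * (S.biUnion f).card := by
  induction S using Finset.induction_on with
  | empty => simp
  | @insert i S hiS ih =>
    rw [Finset.card_insert_of_notMem hiS] at hS ⊢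
    have hinter : (f i ∩ S.biUnion f).card ≤ S.card := by
      rw [Finset.inter_biUnion (f i) S f]
      refine (Finset.card_biUnion_le_card_mul S _ 1 fun j hj => ?_).trans_eq (mul_one _)
      exact hpair (by simp) (by simp [hj]) (by rintro rfl; exact hiS hj)
    have hunion := Finset.card_union_add_card_inter (f i) (S.biUnion f)
    have hfi := hf i (Finset.mem_insert_self i S)
    have ihS := ih (by omega) (fun j hj => hf j (Finset.mem_insert_of_mem hj))
      (hpair.mono (by simp))
    rw [Finset.biUnion_insert]
    obtain ⟨c, hc⟩ : ∃ c, 2 * a = S.card + 1 + c := ⟨2 * a - (S.card + 1), by omega⟩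
    rw [show 2 * a + 1 - S.card = c + 2 by omega, show 2 * a + 1 - (S.card + 1) = c + 1 by omega]
      at *
    nlinarith

theorem card_mul_sq_le_two_mul_max_mul_card_biUnion (S : Finset ι)
    (hf : ∀ i ∈ S, a ≤ (f i).card)
    (hpair : (S : Set ι).Pairwise fun i j => (f i ∩ f j).card ≤ 1) :
    S.card * a ^ 2 ≤ 2 * max S.card a * (S.biUnion f).card := by
  obtain ⟨T, hTS, hT⟩ := Finset.exists_subset_card_eq (min_le_left S.card a)
  have hTa : min S.card a * a ≤ 2 * (S.biUnion f).card :=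
    calc min S.card a * a ≤ T.card * (2 * a + 1 - T.card) := by
          rw [hT]; exact Nat.mul_le_mul_left _ (by omega)
      _ ≤ 2 * (T.biUnion f).card :=
          card_mul_sub_le_two_mul_card_biUnion (hT ▸ min_le_right _ _)
            (fun i hi => hf i (hTS hi)) (hpair.mono (by simpa using hTS))
      _ ≤ 2 * (S.biUnion f).card := by gcongr
  calc S.card * a ^ 2 = min S.card a * a * max S.card a := by
        rw [mul_right_comm, min_mul_max]; ring
    _ ≤ 2 * (S.biUnion f).card * max S.card a := by gcongr
    _ = 2 * max S.card a * (S.biUnion f).card := by ring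

end Combinatorics

section Hairbrush

open scoped Classical

variable {F : Type*} [Field F] {n : ℕ}

theorem card_mul_sq_le_of_forall_subset_plane [Fintype F] {C₁ : ℝ} (hC₁ : 1 ≤ C₁)
    {L : Finset (Set (Fin n → F))}
    (hwolff : ∀ π : Set (Fin n → F), IsPlane π →
      ((L.filter (fun ℓ => ℓ ⊆ π)).card : ℝ) ≤ C₁ * Fintype.card F)
    {π : Set (Fin n → F)} (hπ : IsPlane π) {S : Finset (Set (Fin n → F))} (hSL : S ⊆ L)
    (hS : ∀ ℓ ∈ S, IsLine ℓ ∧ ℓ ⊆ π) (A : Finset (Fin n → F)) {a : ℕ}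
    (ha : ∀ ℓ ∈ S, a ≤ (A.filter (· ∈ ℓ)).card) :
    (S.card : ℝ) * a ^ 2 ≤ 2 * C₁ * Fintype.card F * (A.filter (· ∈ π)).card := by
  rcases S.eq_empty_or_nonempty with rfl | ⟨ℓ₁, hℓ₁⟩
  · simp only [Finset.card_empty, CharP.cast_eq_zero, zero_mul]
    have : (0 : ℝ) ≤ C₁ := by linarith
    positivity
  have hSq : (S.card : ℝ) ≤ C₁ * Fintype.card F :=
    le_trans (Nat.cast_le.mpr (Finset.card_le_card fun ℓ hℓ =>
      Finset.mem_filter.mpr ⟨hSL hℓ, (hS ℓ hℓ).2⟩)) (hwolff π hπ)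
  have haq : (a : ℝ) ≤ C₁ * Fintype.card F := by
    have : (a : ℝ) ≤ Fintype.card F := by
      exact_mod_cast (ha ℓ₁ hℓ₁).trans ((hS ℓ₁ hℓ₁).1.card_filter_mem_le A)
    nlinarith
  have hcount := card_mul_sq_le_two_mul_max_mul_card_biUnion S ha fun ℓ hℓ ℓ' hℓ' hne =>
    Finset.card_le_one.mpr fun x hx y hy => by
      simp only [Finset.mem_inter, Finset.mem_filter] at hx hy
      exact (hS ℓ hℓ).1.inter_subsingleton (hS ℓ' hℓ').1 hne ⟨hx.1.2, hx.2.2⟩ ⟨hy.1.2, hy.2.2⟩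
  have hunion : S.biUnion (fun ℓ => A.filter (· ∈ ℓ)) ⊆ A.filter (· ∈ π) :=
    Finset.biUnion_subset.mpr fun ℓ hℓ =>
      Finset.monotone_filter_right A fun _ _ hx => (hS ℓ hℓ).2 hx
  calc (S.card : ℝ) * a ^ 2
      ≤ 2 * max (S.card : ℝ) a * (S.biUnion (fun ℓ => A.filter (· ∈ ℓ))).card := by
        exact_mod_cast hcount
    _ ≤ 2 * (C₁ * Fintype.card F) * (A.filter (· ∈ π)).card := by
        gcongr
        exact max_le hSq haq
    _ = 2 * C₁ * Fintype.card F * (A.filter (· ∈ π)).card := by ring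

theorem exists_vectorSpan_union_eq_span_pair {a₀ b₀ : Fin n → F} {ℓ : Set (Fin n → F)}
    (hℓ : IsLine ℓ) (hne : ℓ ≠ mk' a₀ (F ∙ b₀)) (hmeet : (ℓ ∩ mk' a₀ (F ∙ b₀)).Nonempty) :
    ∃ d, d ∉ F ∙ b₀ ∧ vectorSpan F (↑(mk' a₀ (F ∙ b₀)) ∪ ℓ) = Submodule.span F {b₀, d} := by
  obtain ⟨p, hp, hp₀⟩ := hmeet
  obtain ⟨d, hd, rfl⟩ := hℓ.exists_eq_mk'_of_mem hp
  rw [← AffineSubspace.mk'_eq hp₀, AffineSubspace.direction_mk'] at hne ⊢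
  refine ⟨d, fun hdb => hne ?_, ?_⟩
  · rw [span_singleton_eq_of_mem hdb hd]
  · rw [AffineSubspace.vectorSpan_union_of_mem_of_mem F (AffineSubspace.self_mem_mk' _ _)
      (AffineSubspace.self_mem_mk' _ _), ← AffineSubspace.direction_eq_vectorSpan,
      ← AffineSubspace.direction_eq_vectorSpan, AffineSubspace.direction_mk',
      AffineSubspace.direction_mk', Submodule.span_insert]

theorem isPlane_mk'_vectorSpan_union {a₀ b₀ : Fin n → F} (hb₀ : b₀ ≠ 0) {ℓ : Set (Fin n → F)}
    (hℓ : IsLine ℓ) (hne : ℓ ≠ mk' a₀ (F ∙ b₀)) (hmeet : (ℓ ∩ mk' a₀ (F ∙ b₀)).Nonempty) :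
    IsPlane (mk' a₀ (vectorSpan F (↑(mk' a₀ (F ∙ b₀)) ∪ ℓ)) : Set (Fin n → F)) := by
  obtain ⟨d, hd, hWd⟩ := exists_vectorSpan_union_eq_span_pair hℓ hne hmeet
  rw [hWd]
  refine isPlane_mk'_span_pair a₀ ((LinearIndependent.pair_iff' hb₀).mpr fun t ht => hd ?_)
  exact Submodule.mem_span_singleton.mpr ⟨t, ht⟩

theorem vectorSpan_union_eq_span_pair_of_mem {a₀ b₀ x : Fin n → F} {ℓ : Set (Fin n → F)}
    (hℓ : IsLine ℓ) (hne : ℓ ≠ mk' a₀ (F ∙ b₀)) (hmeet : (ℓ ∩ mk' a₀ (F ∙ b₀)).Nonempty)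
    (hx : x ∈ mk' a₀ (vectorSpan F (↑(mk' a₀ (F ∙ b₀)) ∪ ℓ))) (hx₀ : x ∉ mk' a₀ (F ∙ b₀)) :
    vectorSpan F (↑(mk' a₀ (F ∙ b₀)) ∪ ℓ) = Submodule.span F {b₀, x - a₀} := by
  obtain ⟨d, -, hd⟩ := exists_vectorSpan_union_eq_span_pair hℓ hne hmeet
  rw [AffineSubspace.mem_mk', hd] at hx
  rw [hd]
  exact span_pair_eq_of_mem_of_notMem hx fun h => hx₀ (AffineSubspace.mem_mk'.mpr h)

theorem card_mul_sq_le_of_hairbrush [Fintype F] {C₁ : ℝ} (hC₁ : 1 ≤ C₁)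
    {P : Finset (Fin n → F)} {L H : Finset (Set (Fin n → F))}
    (hwolff : ∀ π : Set (Fin n → F), IsPlane π →
      ((L.filter (fun ℓ => ℓ ⊆ π)).card : ℝ) ≤ C₁ * Fintype.card F)
    (hHL : H ⊆ L) {ℓ₀ : Set (Fin n → F)} (hℓ₀ : IsLine ℓ₀)
    (hH : ∀ ℓ ∈ H, IsLine ℓ ∧ ℓ ≠ ℓ₀ ∧ (ℓ ∩ ℓ₀).Nonempty)
    {a : ℕ} (ha : ∀ ℓ ∈ H, a ≤ (P.filter (· ∈ ℓ \ ℓ₀)).card) :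
    (H.card : ℝ) * a ^ 2 ≤ 2 * C₁ * Fintype.card F * P.card := by
  obtain ⟨a₀, b₀, hb₀, rfl⟩ := hℓ₀.exists_eq_mk'
  set ℓ₀ : Set (Fin n → F) := ↑(mk' a₀ (F ∙ b₀))
  set P₀ := P.filter (· ∉ ℓ₀)
  let W : Set (Fin n → F) → Submodule F (Fin n → F) := fun ℓ => vectorSpan F (ℓ₀ ∪ ℓ)
  let Q : Submodule F (Fin n → F) → Finset (Fin n → F) :=
    fun V => P₀.filter (· ∈ (mk' a₀ V : Set (Fin n → F)))
  have hsub : ∀ ℓ, ℓ ⊆ (mk' a₀ (W ℓ) : Set (Fin n → F)) := fun ℓ x hx =>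
    AffineSubspace.mem_mk'.mpr (vsub_mem_vectorSpan F (Or.inr hx)
      (Or.inl (AffineSubspace.self_mem_mk' a₀ _)))
  have hdisj : ((H.image W : Finset _) : Set (Submodule F (Fin n → F))).PairwiseDisjoint Q := by
    rintro _ hV₁ _ hV₂ hne
    obtain ⟨ℓ₁, hℓ₁, rfl⟩ := Finset.mem_image.mp hV₁
    obtain ⟨ℓ₂, hℓ₂, rfl⟩ := Finset.mem_image.mp hV₂
    refine Finset.disjoint_left.mpr fun x hx₁ hx₂ => hne ?_
    simp only [Q, P₀, Finset.mem_filter] at hx₁ hx₂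
    obtain ⟨hline₁, hne₁, hmeet₁⟩ := hH ℓ₁ hℓ₁
    obtain ⟨hline₂, hne₂, hmeet₂⟩ := hH ℓ₂ hℓ₂
    exact (vectorSpan_union_eq_span_pair_of_mem hline₁ hne₁ hmeet₁ hx₁.2 hx₁.1.2).trans
      (vectorSpan_union_eq_span_pair_of_mem hline₂ hne₂ hmeet₂ hx₂.2 hx₁.1.2).symm
  have hfiber : ∀ V ∈ H.image W,
      ((H.filter (W · = V)).card : ℝ) * a ^ 2 ≤ 2 * C₁ * Fintype.card F * (Q V).card := by
    intro V hV
    obtain ⟨ℓ₁, hℓ₁, rfl⟩ := Finset.mem_image.mp hV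
    obtain ⟨hline₁, hne₁, hmeet₁⟩ := hH ℓ₁ hℓ₁
    refine card_mul_sq_le_of_forall_subset_plane hC₁ hwolff
      (isPlane_mk'_vectorSpan_union hb₀ hline₁ hne₁ hmeet₁)
      ((Finset.filter_subset _ H).trans hHL) (fun ℓ hℓ => ?_) P₀ fun ℓ hℓ => ?_
    · obtain ⟨hℓH, hℓW⟩ := Finset.mem_filter.mp hℓ
      exact ⟨(hH ℓ hℓH).1, (hℓW ▸ hsub ℓ : ℓ ⊆ (mk' a₀ (W ℓ₁) : Set (Fin n → F)))⟩
    · rw [Finset.filter_filter]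
      simpa only [Set.mem_sdiff, and_comm] using ha ℓ (Finset.mem_filter.mp hℓ).1
  calc (H.card : ℝ) * a ^ 2 = ∑ V ∈ H.image W, ((H.filter (W · = V)).card : ℝ) * a ^ 2 := by
        rw [Finset.card_eq_sum_card_image W H, Nat.cast_sum, Finset.sum_mul]
    _ ≤ ∑ V ∈ H.image W, 2 * C₁ * Fintype.card F * (Q V).card := Finset.sum_le_sum hfiber
    _ = 2 * C₁ * Fintype.card F * ((H.image W).biUnion Q).card := by
        rw [Finset.card_biUnion hdisj, Nat.cast_sum, Finset.mul_sum]
    _ ≤ 2 * C₁ * Fintype.card F * P.card := by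
        gcongr
        exact (Finset.biUnion_subset.mpr fun V _ => Finset.filter_subset _ P₀).trans
          (Finset.filter_subset _ P)

end Hairbrush

section Incidences

open scoped Classical

variable {α : Type*}

theorem mul_sum_le_mul_sum_filter_add {β : Type*} (S : Finset β) (d : β → ℕ) (k c : ℕ) :
    k * ∑ x ∈ S, d x ≤ k * ∑ x ∈ S with c ≤ k * S.card * d x, d x + c := by
  rw [← Finset.sum_filter_add_sum_filter_not S (fun x => c ≤ k * S.card * d x), mul_add]
  suffices k * ∑ x ∈ S with ¬c ≤ k * S.card * d x, d x ≤ c by omega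
  rcases S.eq_empty_or_nonempty with rfl | hS
  · simp
  refine Nat.le_of_mul_le_mul_left ?_ hS.card_pos
  calc S.card * (k * ∑ x ∈ S with ¬c ≤ k * S.card * d x, d x)
      = ∑ x ∈ S with ¬c ≤ k * S.card * d x, k * S.card * d x := by
        rw [Finset.mul_sum, Finset.mul_sum]
        exact Finset.sum_congr rfl fun _ _ => by ring
    _ ≤ ∑ x ∈ S with ¬c ≤ k * S.card * d x, c :=
        Finset.sum_le_sum fun x hx => (not_le.mp (Finset.mem_filter.mp hx).2).le
    _ ≤ S.card * c := by
        rw [Finset.sum_const, smul_eq_mul]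
        exact Nat.mul_le_mul_right _ (Finset.card_filter_le _ _)

theorem card_filter_mem_le_card_filter_mem_diff_add_one {ℓ ℓ₀ : Set α}
    (h : (ℓ ∩ ℓ₀).Subsingleton) (P : Finset α) :
    (P.filter (· ∈ ℓ)).card ≤ (P.filter (· ∈ ℓ \ ℓ₀)).card + 1 := by
  have hon : (P.filter (· ∈ ℓ ∩ ℓ₀)).card ≤ 1 :=
    Finset.card_le_one.mpr fun x hx y hy =>
      h (Finset.mem_filter.mp hx).2 (Finset.mem_filter.mp hy).2
  calc (P.filter (· ∈ ℓ)).card ≤ (P.filter (· ∈ ℓ \ ℓ₀) ∪ P.filter (· ∈ ℓ ∩ ℓ₀)).card := by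
        refine Finset.card_le_card fun x hx => ?_
        by_cases hx₀ : x ∈ ℓ₀ <;> simp_all
    _ ≤ _ := (Finset.card_union_le _ _).trans (by omega)

noncomputable def incidences (P : Finset α) (L : Finset (Set α)) : Finset (α × Set α) :=
  (P ×ˢ L).filter fun pl => pl.1 ∈ pl.2

theorem card_incidences (P : Finset α) (L : Finset (Set α)) :
    (incidences P L).card = ∑ ℓ ∈ L, (P.filter (· ∈ ℓ)).card := by
  rw [incidences, Finset.card_filter, Finset.sum_product_right]
  exact Finset.sum_congr rfl fun ℓ _ => (Finset.card_filter _ _).symm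

theorem sum_card_filter_mem_comm (P : Finset α) (L : Finset (Set α)) :
    ∑ ℓ ∈ L, (P.filter (· ∈ ℓ)).card = ∑ p ∈ P, (L.filter (p ∈ ·)).card :=
  (Finset.sum_card_bipartiteAbove_eq_sum_card_bipartiteBelow (fun p ℓ => p ∈ ℓ)).symm

noncomputable def richLines (P : Finset α) (L : Finset (Set α)) : Finset (Set α) :=
  L.filter fun ℓ => (incidences P L).card ≤ 8 * L.card * (P.filter (· ∈ ℓ)).card

noncomputable def richPoints (P : Finset α) (L : Finset (Set α)) : Finset α :=
  P.filter fun p => (incidences P L).card ≤ 8 * P.card * ((richLines P L).filter (p ∈ ·)).card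

noncomputable def hairbrush (L : Finset (Set α)) (ℓ₀ : Set α) : Finset (Set α) :=
  L.filter fun ℓ => ℓ ≠ ℓ₀ ∧ (ℓ ∩ ℓ₀).Nonempty

variable (P : Finset α) (L : Finset (Set α))

theorem exists_mem_richLines_three_mul_le (hI : 0 < (incidences P L).card) :
    ∃ ℓ₀ ∈ richLines P L,
      3 * (incidences P L).card ≤ 4 * L.card * ((richPoints P L).filter (· ∈ ℓ₀)).card := by
  have hlines : 7 * (incidences P L).card ≤ 8 * ∑ ℓ ∈ richLines P L, (P.filter (· ∈ ℓ)).card := by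
    have := mul_sum_le_mul_sum_filter_add L (fun ℓ => (P.filter (· ∈ ℓ)).card) 8
      (incidences P L).card
    rw [← card_incidences] at this
    unfold richLines
    omega
  have hpoints : 6 * (incidences P L).card ≤
      8 * ∑ p ∈ richPoints P L, ((richLines P L).filter (p ∈ ·)).card := by
    have := mul_sum_le_mul_sum_filter_add P (fun p => ((richLines P L).filter (p ∈ ·)).card)
      8 (incidences P L).card
    rw [← sum_card_filter_mem_comm] at this
    unfold richPoints
    omega
  rw [← sum_card_filter_mem_comm] at hpoints
  obtain ⟨ℓ₀, hℓ₀, hmax⟩ := Finset.exists_max_image (richLines P L)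
    (fun ℓ => ((richPoints P L).filter (· ∈ ℓ)).card)
    (Finset.nonempty_iff_ne_empty.mpr fun h => by rw [h, Finset.sum_empty] at hpoints; omega)
  refine ⟨ℓ₀, hℓ₀, ?_⟩
  have hsum := Finset.sum_le_card_nsmul _ _ _ hmax
  have hcard : (richLines P L).card ≤ L.card := Finset.card_filter_le _ _
  rw [smul_eq_mul] at hsum
  nlinarith

variable {L}

theorem card_filter_richPoints_mul_le
    (hL : (L : Set (Set α)).Pairwise fun ℓ ℓ' => (ℓ ∩ ℓ').Subsingleton)
    (hP : 16 * P.card ≤ (incidences P L).card) {ℓ₀ : Set α} (hℓ₀ : ℓ₀ ∈ L) :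
    ((richPoints P L).filter (· ∈ ℓ₀)).card * (incidences P L).card ≤
      16 * P.card * (hairbrush (richLines P L) ℓ₀).card := by
  set K := (richPoints P L).filter (· ∈ ℓ₀)
  set H := hairbrush (richLines P L) ℓ₀
  have hper : ∀ p ∈ K, (incidences P L).card ≤ 16 * P.card * (H.filter (p ∈ ·)).card := by
    intro p hp
    obtain ⟨hpP, hpℓ₀⟩ := Finset.mem_filter.mp hp
    have hrich := (Finset.mem_filter.mp hpP).2
    have hsub : (richLines P L).filter (p ∈ ·) ⊆ insert ℓ₀ (H.filter (p ∈ ·)) := by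
      intro ℓ hℓ
      obtain ⟨hℓL, hpℓ⟩ := Finset.mem_filter.mp hℓ
      by_cases hℓℓ₀ : ℓ = ℓ₀
      · exact hℓℓ₀ ▸ Finset.mem_insert_self _ _
      · exact Finset.mem_insert_of_mem
          (Finset.mem_filter.mpr ⟨Finset.mem_filter.mpr ⟨hℓL, hℓℓ₀, p, hpℓ, hpℓ₀⟩, hpℓ⟩)
    have := (Finset.card_le_card hsub).trans (Finset.card_insert_le _ _)
    nlinarith
  -- a line of the hairbrush meets `ℓ₀`, hence `K`, at most once
  have hcount : ∑ p ∈ K, (H.filter (p ∈ ·)).card ≤ H.card := by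
    rw [← sum_card_filter_mem_comm]
    refine (Finset.sum_le_card_nsmul H _ 1 fun ℓ hℓ => ?_).trans_eq (by simp)
    obtain ⟨hℓL, hne, -⟩ := Finset.mem_filter.mp hℓ
    refine Finset.card_le_one.mpr fun x hx y hy => ?_
    simp only [K, Finset.mem_filter] at hx hy
    exact hL (Finset.filter_subset _ L hℓL) hℓ₀ hne ⟨hx.2, hx.1.2⟩ ⟨hy.2, hy.1.2⟩
  calc K.card * (incidences P L).card = ∑ _p ∈ K, (incidences P L).card := by
        rw [Finset.sum_const, smul_eq_mul]
    _ ≤ ∑ p ∈ K, 16 * P.card * (H.filter (p ∈ ·)).card := Finset.sum_le_sum hper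
    _ ≤ 16 * P.card * H.card := by
        rw [← Finset.mul_sum]
        exact Nat.mul_le_mul_left _ hcount

theorem exists_le_card_filter_mem_diff_of_mem_hairbrush
    (hL : (L : Set (Set α)).Pairwise fun ℓ ℓ' => (ℓ ∩ ℓ').Subsingleton)
    (hLI : 32 * L.card < (incidences P L).card) {ℓ₀ : Set α} (hℓ₀ : ℓ₀ ∈ L) :
    ∃ a : ℕ, (incidences P L).card ≤ 16 * L.card * a ∧
      ∀ ℓ ∈ hairbrush (richLines P L) ℓ₀, a ≤ (P.filter (· ∈ ℓ \ ℓ₀)).card := by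
  have hL0 : 0 < 8 * L.card := by
    rcases Nat.eq_zero_or_pos L.card with h | h
    · simp [Finset.card_eq_zero.mp h, card_incidences] at hLI
    · omega
  set A := (incidences P L).card / (8 * L.card)
  have hA : 4 ≤ A := (Nat.le_div_iff_mul_le hL0).mpr (by omega)
  have hIA : (incidences P L).card < 8 * L.card * (A + 1) := Nat.lt_mul_div_succ _ hL0
  refine ⟨A - 1, ?_, fun ℓ hℓ => ?_⟩
  · obtain ⟨a, ha⟩ : ∃ a, A = a + 1 := ⟨A - 1, by omega⟩
    rw [ha] at hA hIA
    rw [ha, Nat.add_sub_cancel]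
    nlinarith
  · obtain ⟨hℓL', hne, -⟩ := Finset.mem_filter.mp hℓ
    obtain ⟨hℓL, hrich⟩ := Finset.mem_filter.mp hℓL'
    have hAℓ : A ≤ (P.filter (· ∈ ℓ)).card := Nat.div_le_of_le_mul hrich
    have := card_filter_mem_le_card_filter_mem_diff_add_one (hL hℓL hℓ₀ hne) P
    omega

theorem exists_hairbrush_of_incidences
    (hL : (L : Set (Set α)).Pairwise fun ℓ ℓ' => (ℓ ∩ ℓ').Subsingleton)
    (hP : 16 * P.card ≤ (incidences P L).card) (hLI : 32 * L.card < (incidences P L).card) :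
    ∃ ℓ₀ ∈ L, ∃ a : ℕ,
      (∀ ℓ ∈ hairbrush (richLines P L) ℓ₀, a ≤ (P.filter (· ∈ ℓ \ ℓ₀)).card) ∧
      (incidences P L).card ≤ 16 * L.card * a ∧
      3 * (incidences P L).card ^ 2 ≤
        64 * L.card * P.card * (hairbrush (richLines P L) ℓ₀).card := by
  obtain ⟨ℓ₀, hℓ₀, hK⟩ := exists_mem_richLines_three_mul_le P L (by omega)
  have hℓ₀L : ℓ₀ ∈ L := Finset.filter_subset _ _ hℓ₀
  obtain ⟨a, hIa, ha⟩ := exists_le_card_filter_mem_diff_of_mem_hairbrush P hL hLI hℓ₀L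
  have hKH := card_filter_richPoints_mul_le P hL hP hℓ₀L
  refine ⟨ℓ₀, hℓ₀L, a, ha, hIa, ?_⟩
  nlinarith

end Incidences

theorem le_mul_rpow_of_pow_four_le {x c p l q : ℝ} (hc : 0 ≤ c) (hp : 0 ≤ p) (hl : 0 ≤ l)
    (hq : 0 ≤ q) (h : x ^ 4 ≤ c ^ 4 * (p ^ 2 * l ^ 3 * q)) :
    x ≤ c * (p ^ ((1 : ℝ) / 2) * l ^ ((3 : ℝ) / 4) * q ^ ((1 : ℝ) / 4)) := by
  refine le_of_pow_le_pow_left₀ four_ne_zero (by positivity) (h.trans_eq ?_)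
  rw [mul_pow, mul_pow, mul_pow, ← Real.rpow_mul_natCast hp, ← Real.rpow_mul_natCast hl,
    ← Real.rpow_mul_natCast hq]
  norm_num

open scoped Classical in
theorem statement14 (C₁ : ℝ) (hC₁ : 1 ≤ C₁) :
    ∃ C : ℝ, ∀ (F : Type) [Field F] [Fintype F],
      ∀ (n : ℕ), 2 ≤ n →
      ∀ (P : Finset (Fin n → F)) (L : Finset (Set (Fin n → F))),
        (∀ ℓ ∈ L, IsLine ℓ) →
        (∀ π : Set (Fin n → F), IsPlane π →
          ((L.filter (fun ℓ => ℓ ⊆ π)).card : ℝ) ≤ C₁ * Fintype.card F) →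
        (((P ×ˢ L).filter (fun pl => pl.1 ∈ pl.2)).card : ℝ) ≤
          C * ((P.card : ℝ) ^ ((1 : ℝ) / 2) * (L.card : ℝ) ^ ((3 : ℝ) / 4) *
                (Fintype.card F : ℝ) ^ ((1 : ℝ) / 4) + P.card + L.card) := by
  refine ⟨32 * C₁, fun F _ _ n _ P L hlines hwolff => ?_⟩
  change ((incidences P L).card : ℝ) ≤ _
  set I := (incidences P L).card
  have hX : 0 ≤ (P.card : ℝ) ^ ((1 : ℝ) / 2) * (L.card : ℝ) ^ ((3 : ℝ) / 4) *
      (Fintype.card F : ℝ) ^ ((1 : ℝ) / 4) := by positivity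
  by_cases hsmall : I ≤ 32 * (P.card + L.card)
  · have : (I : ℝ) ≤ 32 * (P.card + L.card) := by exact_mod_cast hsmall
    nlinarith [mul_nonneg (sub_nonneg.mpr hC₁) (by positivity : (0 : ℝ) ≤ P.card + L.card)]
  have hL : (L : Set (Set (Fin n → F))).Pairwise fun ℓ ℓ' => (ℓ ∩ ℓ').Subsingleton :=
    fun ℓ hℓ ℓ' hℓ' hne => (hlines ℓ hℓ).inter_subsingleton (hlines ℓ' hℓ') hne
  obtain ⟨ℓ₀, hℓ₀, a, ha, hIa, hIH⟩ := exists_hairbrush_of_incidences P hL (by omega) (by omega)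
  set H := hairbrush (richLines P L) ℓ₀
  have hHL : H ⊆ L := (Finset.filter_subset _ _).trans (Finset.filter_subset _ _)
  have hHa := card_mul_sq_le_of_hairbrush hC₁ hwolff hHL (hlines ℓ₀ hℓ₀)
    (fun ℓ hℓ => ⟨hlines ℓ (hHL hℓ), (Finset.mem_filter.mp hℓ).2⟩) ha
  have hI4 : (I : ℝ) ^ 4 ≤ (11 * C₁) ^ 4 * (P.card ^ 2 * L.card ^ 3 * Fintype.card F) := by
    have hIH' : (3 : ℝ) * I ^ 2 ≤ 64 * L.card * P.card * H.card := by exact_mod_cast hIH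
    have hIa' : (I : ℝ) ≤ 16 * L.card * a := by exact_mod_cast hIa
    have hC : C₁ ≤ C₁ ^ 4 := le_self_pow₀ hC₁ (by norm_num)
    calc (I : ℝ) ^ 4 = I ^ 2 * I ^ 2 := by ring
      _ ≤ ((64 : ℝ) / 3 * L.card * P.card * H.card) * (16 * L.card * a) ^ 2 := by gcongr; linarith
      _ = (16384 : ℝ) / 3 * L.card ^ 3 * P.card * (H.card * a ^ 2) := by ring
      _ ≤ (16384 : ℝ) / 3 * L.card ^ 3 * P.card * (2 * C₁ * Fintype.card F * P.card) := by gcongr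
      _ = (32768 : ℝ) / 3 * C₁ * (P.card ^ 2 * L.card ^ 3 * Fintype.card F) := by ring
      _ ≤ 14641 * C₁ ^ 4 * (P.card ^ 2 * L.card ^ 3 * Fintype.card F) := by gcongr; norm_num
      _ = (11 * C₁) ^ 4 * (P.card ^ 2 * L.card ^ 3 * Fintype.card F) := by ring
  have := le_mul_rpow_of_pow_four_le (by positivity) (by positivity) (by positivity)
    (by positivity) hI4
  nlinarith [mul_nonneg (by positivity : (0 : ℝ) ≤ C₁) hX]
end

section
/- For every n ≥ 2 there is a constant c_n > 0 depending only on n such that for every finite field F, every Besicovitch set E ⊆ F^n satisfies |E| ≥ c_n |F|^{(n+2)/2}. -/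
open scoped BigOperators

/-!
Dvir's polynomial method. Put `n = m + 1` and `q = |F|`. If `|E| < (k + 1)^n` with `n k < q`,
linear algebra gives a nonzero polynomial `p` of degree `d ≤ n k < q` vanishing on `E`.
Restricted to a line of `E` with direction `w`, `p` becomes a univariate polynomial of degree
`≤ d < q` vanishing on all of `F`, hence zero; its `t^d` coefficient is `p_d(w)`, where `p_d` is
the top homogeneous component. So `p_d` vanishes at every direction `(v, 1)`, hence (rescaling
the line) wherever the last coordinate is nonzero, and `x_n p_d` is a homogeneous polynomial of
degree `d + 1 ≤ q` vanishing everywhere, so `p_d = 0`, a contradiction. Choosing `k` maximal gives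
`|E| ≥ q^n / n^n`, which beats `q^{(n+2)/2}` since `n ≥ 2`.
-/

theorem Finsupp.prod_map_toMultiset {σ M : Type*} [CommMonoid M] (α : σ →₀ ℕ)
    (f : σ → M) : (α.toMultiset.map f).prod = α.prod fun i k => f i ^ k := by
  rw [Finsupp.toMultiset_map, Finsupp.prod_toMultiset,
    Finsupp.prod_mapDomain_index (fun _ => pow_zero _) (fun _ _ _ => pow_add _ _ _)]

theorem Finsupp.card_toMultiset_eq_degree {σ : Type*} (α : σ →₀ ℕ) :
    Multiset.card α.toMultiset = α.degree := by
  rw [Finsupp.card_toMultiset, Finsupp.degree_apply]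
  rfl

namespace MvPolynomial

section RestrictLine

variable {R σ : Type*} [CommSemiring R]

noncomputable def restrictLine (a w : σ → R) : MvPolynomial σ R →ₐ[R] Polynomial R :=
  aeval fun i => Polynomial.C (w i) * Polynomial.X + Polynomial.C (a i)

theorem eval_restrictLine (a w : σ → R) (p : MvPolynomial σ R) (t : R) :
    (restrictLine a w p).eval t = eval (a + t • w) p := by
  rw [restrictLine, ← Polynomial.coe_aeval_eq_eval, comp_aeval_apply, ← aeval_eq_eval]
  congr 2
  funext i
  simp only [map_add, map_mul, Polynomial.aeval_C, Polynomial.aeval_X, Pi.add_apply,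
    Pi.smul_apply, smul_eq_mul, Algebra.algebraMap_self, RingHom.id_apply]
  ring

theorem restrictLine_monomial (a w : σ → R) (α : σ →₀ ℕ) (c : R) :
    restrictLine a w (monomial α c) = Polynomial.C c *
      (α.toMultiset.map fun i => Polynomial.C (w i) * Polynomial.X + Polynomial.C (a i)).prod := by
  rw [restrictLine, aeval_monomial, Finsupp.prod_map_toMultiset]
  rfl

theorem natDegree_restrictLine_monomial_le (a w : σ → R) (α : σ →₀ ℕ) (c : R) :
    (restrictLine a w (monomial α c)).natDegree ≤ α.degree := by
  rw [restrictLine_monomial]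
  refine (Polynomial.natDegree_C_mul_le _ _).trans <|
    (Polynomial.natDegree_multiset_prod_le _).trans <| (Multiset.sum_le_card_nsmul _ 1 ?_).trans ?_
  · simp only [Multiset.map_map, Multiset.mem_map]
    rintro _ ⟨i, -, rfl⟩
    exact Polynomial.natDegree_linear_le
  · simp only [Multiset.card_map, Finsupp.card_toMultiset_eq_degree, smul_eq_mul, mul_one, le_rfl]

theorem coeff_restrictLine_monomial_degree (a w : σ → R) (α : σ →₀ ℕ) (c : R) :
    (restrictLine a w (monomial α c)).coeff α.degree = eval w (monomial α c) := by
  set line : σ → Polynomial R := fun i => Polynomial.C (w i) * Polynomial.X + Polynomial.C (a i)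
  have htop := Polynomial.coeff_multiset_prod_of_natDegree_le (α.toMultiset.map line) 1 <| by
    simp only [Multiset.mem_map]
    rintro _ ⟨i, -, rfl⟩
    exact Polynomial.natDegree_linear_le
  rw [Multiset.card_map, mul_one, Finsupp.card_toMultiset_eq_degree] at htop
  rw [restrictLine_monomial, Polynomial.coeff_C_mul, htop, eval_monomial,
    ← Finsupp.prod_map_toMultiset]
  simp [line]

theorem natDegree_restrictLine_le (a w : σ → R) (p : MvPolynomial σ R) :
    (restrictLine a w p).natDegree ≤ p.totalDegree := by
  conv_lhs => rw [p.as_sum]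
  rw [map_sum]
  refine Polynomial.natDegree_sum_le_of_forall_le _ _ fun α hα => ?_
  exact (natDegree_restrictLine_monomial_le a w α _).trans (le_totalDegree hα)

theorem coeff_restrictLine_of_totalDegree_le (a w : σ → R) {p : MvPolynomial σ R} {d : ℕ}
    (hp : p.totalDegree ≤ d) :
    (restrictLine a w p).coeff d = eval w (homogeneousComponent d p) := by
  classical
  conv_lhs => rw [p.as_sum]
  rw [map_sum, Polynomial.finsetSum_coeff, homogeneousComponent_apply, map_sum, Finset.sum_filter]
  refine Finset.sum_congr rfl fun α hα => ?_
  split_ifs with hαd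
  · rw [← hαd, coeff_restrictLine_monomial_degree]
  · refine Polynomial.coeff_eq_zero_of_natDegree_lt <|
      (natDegree_restrictLine_monomial_le a w α _).trans_lt ?_
    exact lt_of_le_of_ne ((le_totalDegree hα).trans hp) hαd

end RestrictLine

open Cardinal in
theorem eval_homogeneousComponent_eq_zero_of_forall_eval_line {R σ : Type*} [CommRing R]
    [IsDomain R] {p : MvPolynomial σ R} (hp : (p.totalDegree : Cardinal) < #R) {a w : σ → R}
    (hline : ∀ t : R, eval (a + t • w) p = 0) :
    eval w (homogeneousComponent p.totalDegree p) = 0 := by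
  have hzero : restrictLine a w p = 0 :=
    Polynomial.eq_zero_of_forall_eval_zero_of_natDegree_lt_card _
      (fun t => (eval_restrictLine a w p t).trans (hline t))
      ((Nat.cast_le.mpr (natDegree_restrictLine_le a w p)).trans_lt hp)
  rw [← coeff_restrictLine_of_totalDegree_le a w le_rfl, hzero, Polynomial.coeff_zero]

theorem homogeneousComponent_totalDegree_ne_zero {R σ : Type*} [CommSemiring R]
    {p : MvPolynomial σ R} (hp : p ≠ 0) : homogeneousComponent p.totalDegree p ≠ 0 := by
  obtain ⟨α, hα, hαd⟩ := Finset.exists_mem_eq_sup p.support (support_nonempty.mpr hp)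
    fun s => s.sum fun _ e => e
  refine ne_of_apply_ne (coeff α) ?_
  rw [coeff_homogeneousComponent, if_pos (by exact hαd.symm), coeff_zero]
  exact mem_support_iff.mp hα

open Cardinal in
theorem eq_zero_of_forall_eval_line_eq_zero {F σ : Type*} [Field F] (i₀ : σ)
    {p : MvPolynomial σ F} (hp : (p.totalDegree : Cardinal) < #F)
    (hlines : ∀ w : σ → F, w i₀ = 1 → ∃ a, ∀ t : F, eval (a + t • w) p = 0) :
    p = 0 := by
  set H := homogeneousComponent p.totalDegree p
  have hH : ∀ x : σ → F, x i₀ ≠ 0 → eval x H = 0 := by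
    intro x hx
    obtain ⟨a, ha⟩ := hlines ((x i₀)⁻¹ • x) (by simp [hx])
    refine eval_homogeneousComponent_eq_zero_of_forall_eval_line (a := a) hp fun t => ?_
    simpa [smul_smul, hx] using ha (t * x i₀)
  have hXH : X i₀ * H = 0 := by
    refine ((isHomogeneous_X F i₀).mul (homogeneousComponent_isHomogeneous _ p))
      |>.eq_zero_of_forall_eval_eq_zero_of_le_card (fun x => ?_) ?_
    · rw [eval_mul, eval_X]
      by_cases hx : x i₀ = 0
      · rw [hx, zero_mul]
      · rw [hH x hx, mul_zero]
    · rw [Nat.cast_add, Nat.cast_one, add_comm]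
      exact Cardinal.natCast_add_one_le_iff.mpr hp
  by_contra hp0
  exact homogeneousComponent_totalDegree_ne_zero hp0 <|
    (mul_eq_zero.mp hXH).resolve_left (X_ne_zero i₀)

theorem exists_ne_zero_forall_eval_eq_zero {F σ : Type*} [Field F]
    (V : Submodule F (MvPolynomial σ F)) [FiniteDimensional F V] (S : Set (σ → F)) [Finite S]
    (hS : Nat.card S < Module.finrank F V) :
    ∃ p ∈ V, p ≠ 0 ∧ ∀ x ∈ S, eval x p = 0 := by
  have := Fintype.ofFinite S
  let evalOn : V →ₗ[F] S → F :=
    LinearMap.pi fun x : S => (aeval x.1).toLinearMap ∘ₗ V.subtype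
  have hker : LinearMap.ker evalOn ≠ ⊥ := LinearMap.ker_ne_bot_of_finrank_lt <| by
    rwa [Module.finrank_fintype_fun_eq_card, ← Nat.card_eq_fintype_card]
  obtain ⟨p, hp, hp0⟩ := Submodule.ne_bot_iff _ |>.mp hker
  refine ⟨p, p.2, by simpa using hp0, fun x hx => ?_⟩
  simpa [evalOn] using congr_fun (LinearMap.mem_ker.mp hp) ⟨x, hx⟩

theorem pow_card_le_finrank_restrictTotalDegree (R σ : Type*) [CommRing R] [Nontrivial R]
    [Fintype σ] (k : ℕ) :
    (k + 1) ^ Fintype.card σ ≤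
      Module.finrank R (restrictTotalDegree σ R (Fintype.card σ * k)) := by
  classical
  let exponent : (σ → Fin (k + 1)) → σ →₀ ℕ :=
    fun g => Finsupp.equivFunOnFinite.symm fun i => (g i : ℕ)
  have hexponent : Function.Injective exponent := fun g g' h => _root_.funext fun i =>
    Fin.val_injective (congr_fun (Finsupp.equivFunOnFinite.symm.injective h) i)
  have hmem : ∀ g, monomial (exponent g) (1 : R) ∈
      restrictTotalDegree σ R (Fintype.card σ * k) := by
    intro g
    rw [mem_restrictTotalDegree, totalDegree_monomial _ one_ne_zero,
      Finsupp.sum_fintype _ _ fun _ => rfl]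
    calc ∑ i, exponent g i ≤ ∑ _i : σ, k :=
          Finset.sum_le_sum fun i _ => Nat.le_of_lt_succ (g i).2
      _ = Fintype.card σ * k := by simp
  let b : (σ → Fin (k + 1)) → restrictTotalDegree σ R (Fintype.card σ * k) :=
    fun g => ⟨monomial (exponent g) 1, hmem g⟩
  have hb : LinearIndependent R b := by
    refine LinearIndependent.of_comp (Submodule.subtype _) ?_
    exact (basisMonomials σ R).linearIndependent.comp _ hexponent
  simpa [Fintype.card_fun] using hb.fintype_card_le_finrank

end MvPolynomial

theorem IsBesicovitch.pow_le_natCard {F : Type*} [Field F] [Fintype F] {m : ℕ}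
    {E : Set ((Fin m → F) × F)} (hE : IsBesicovitch E) {k : ℕ}
    (hk : (m + 1) * k < Fintype.card F) : (k + 1) ^ (m + 1) ≤ Nat.card E := by
  let split : (Fin m ⊕ Unit → F) → (Fin m → F) × F :=
    fun x => (x ∘ Sum.inl, x (Sum.inr ()))
  have hsplit : Function.Injective split := fun x y h => by
    ext (i | u)
    · exact congr_fun (congr_arg Prod.fst h) i
    · exact congr_arg Prod.snd h
  let S := split ⁻¹' E
  have hS : Nat.card S ≤ Nat.card E :=
    Nat.card_le_card_of_injective (fun x => ⟨split x, x.2⟩)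
      fun x y h => Subtype.ext (hsplit (congr_arg Subtype.val h))
  have hdim := MvPolynomial.pow_card_le_finrank_restrictTotalDegree F (Fin m ⊕ Unit) k
  rw [Fintype.card_sum, Fintype.card_fin, Fintype.card_unit] at hdim
  by_contra! hlt
  obtain ⟨p, hpV, hp0, hpS⟩ :=
    MvPolynomial.exists_ne_zero_forall_eval_eq_zero _ S (hS.trans_lt (hlt.trans_le hdim))
  refine hp0 (MvPolynomial.eq_zero_of_forall_eval_line_eq_zero (Sum.inr ()) ?_ fun w hw => ?_)
  · rw [Cardinal.mk_fintype, Nat.cast_lt]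
    exact ((MvPolynomial.mem_restrictTotalDegree _ _ _).mp hpV).trans_lt hk
  · obtain ⟨x₀, hx₀⟩ := hE (w ∘ Sum.inl)
    refine ⟨Sum.elim x₀ 0, fun t => hpS _ (hx₀ ⟨t, ?_⟩)⟩
    ext i <;> simp [split, hw]

theorem IsBesicovitch.card_pow_le {F : Type*} [Field F] [Fintype F] {m : ℕ}
    {E : Set ((Fin m → F) × F)} (hE : IsBesicovitch E) :
    Fintype.card F ^ (m + 1) ≤ (m + 1) ^ (m + 1) * Nat.card E := by
  set q := Fintype.card F
  have hq : 0 < q := Fintype.card_pos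
  have hkq : (m + 1) * ((q - 1) / (m + 1)) < q := by
    have := Nat.mul_div_le (q - 1) (m + 1)
    omega
  have hqk : q ≤ (m + 1) * ((q - 1) / (m + 1) + 1) := by
    have := Nat.lt_mul_div_succ (q - 1) (show 0 < m + 1 by omega)
    omega
  calc q ^ (m + 1) ≤ ((m + 1) * ((q - 1) / (m + 1) + 1)) ^ (m + 1) := Nat.pow_le_pow_left hqk _
    _ = (m + 1) ^ (m + 1) * ((q - 1) / (m + 1) + 1) ^ (m + 1) := mul_pow _ _ _
    _ ≤ (m + 1) ^ (m + 1) * Nat.card E := Nat.mul_le_mul_left _ (hE.pow_le_natCard hkq)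

/-- Besicovitch sets in `F^n` (here `n = m + 1 ≥ 2`) have cardinality `≳ |F|^{(n+2)/2}`;
note `(n + 2) / 2 = (m + 3) / 2`. -/
theorem statement15 (m : ℕ) (hm : 1 ≤ m) :
    ∃ c : ℝ, 0 < c ∧ ∀ (F : Type) [Field F] [Fintype F],
      ∀ E : Set ((Fin m → F) × F), IsBesicovitch E →
        c * (Fintype.card F : ℝ) ^ (((m : ℝ) + 3) / 2) ≤ Nat.card E := by
  refine ⟨(((m : ℝ) + 1) ^ (m + 1))⁻¹, by positivity, fun F _ _ E hE => ?_⟩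
  have hq : (1 : ℝ) ≤ Fintype.card F := by exact_mod_cast Fintype.card_pos
  have hexp : ((m : ℝ) + 3) / 2 ≤ ((m + 1 : ℕ) : ℝ) := by
    have : (1 : ℝ) ≤ m := by exact_mod_cast hm
    push_cast
    linarith
  rw [inv_mul_le_iff₀ (by positivity)]
  calc (Fintype.card F : ℝ) ^ (((m : ℝ) + 3) / 2)
      ≤ (Fintype.card F : ℝ) ^ ((m + 1 : ℕ) : ℝ) := Real.rpow_le_rpow_of_exponent_le hq hexp
    _ = (Fintype.card F : ℝ) ^ (m + 1) := Real.rpow_natCast _ _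
    _ ≤ ((m : ℝ) + 1) ^ (m + 1) * Nat.card E := by exact_mod_cast hE.card_pow_le
end

section
/- Let n ≥ 2, let F be a finite field, let α ≥ 1 and C ≥ 1 be reals, and let R ⊆ F be a nonempty set of slopes with −1 ∉ R. Suppose the sums-differences hypothesis SD(R, α) holds with constant C: for every G ⊆ F^{n−1} × F^{n−1} on which the map (a, b) ↦ a − b is injective, one has |G| ≤ C · max_{r∈R} |{a + r·b : (a, b) ∈ G}|^α. Then every Besicovitch set E ⊆ F^n satisfies |E| ≥ c |F|^{(n−1)/α + 1}, where c > 0 is a constant depending only on n, α, C and |R|. -/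
open scoped BigOperators

/-!
Fix a line `t ↦ (x₀ v + t v, t)` in each direction `v ∈ V = F^{n-1}`. For a height `s ≠ 0` the
pairs `(x₀ v + s v, x₀ v)` have pairwise distinct differences `s v`, so `SD(R, α)` yields `r ∈ R`
with `|V| ≤ C |{a + r b}|^α`. Since `a + r b = (1 + r)(x₀ v + (s / (1 + r)) v)` and `1 + r ≠ 0`,
the slice of `E` at height `s / (1 + r)` is then at least as large as `{a + r b}`, so it has at
least `|V|^{1/α} / C` points. Every `s ≠ 0` is of the form `(1 + r) u` with `r ∈ R` and `u` such
a rich height, hence there are at least `(|F| - 1) / |R|` rich heights.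
-/

open Finset

section

variable {F V : Type*} [Fintype V]

open Classical in
noncomputable def heightSlice (E : Set (V × F)) (u : F) : Finset V :=
  univ.filter fun x => (x, u) ∈ E

theorem mem_heightSlice {E : Set (V × F)} {u : F} {x : V} :
    x ∈ heightSlice E u ↔ (x, u) ∈ E := by
  classical
  simp [heightSlice]

theorem sum_card_heightSlice_le_natCard [Fintype F] (E : Set (V × F)) (U : Finset F) :
    ∑ u ∈ U, #(heightSlice E u) ≤ Nat.card E := by
  classical
  rw [← card_sigma, Nat.card_eq_card_toFinset]
  refine card_le_card_of_injOn (fun p => (p.2, p.1)) (fun p hp => ?_) (fun p _ q _ hpq => ?_)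
  · simpa [mem_heightSlice] using (mem_sigma.mp hp).2
  · simp only [Prod.mk.injEq] at hpq
    exact Sigma.ext hpq.2 (heq_of_eq hpq.1)

end

section

variable {F V : Type*} [Field F] [AddCommGroup V] [Module F V]

variable (V) in
/-- The sums-differences hypothesis `SD(R, α)` on `V` with constant `C`. -/
def SumsDifferences [DecidableEq V] (R : Finset F) (C α : ℝ) : Prop :=
  ∀ G : Finset (V × V), Set.InjOn (fun ab : V × V => ab.1 - ab.2) ↑G →
    ∃ r ∈ R, (G.card : ℝ) ≤ C * ((G.image (fun ab : V × V => ab.1 + r • ab.2)).card : ℝ) ^ α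

theorem one_add_ne_zero_of_mem {R : Finset F} (hR : (-1 : F) ∉ R) {r : F} (hr : r ∈ R) :
    1 + r ≠ 0 :=
  fun h => hR (by rwa [← eq_neg_of_add_eq_zero_right h])

theorem add_smul_add_smul_eq {r : F} (hr : 1 + r ≠ 0) (s : F) (x v : V) :
    (x + s • v) + r • x = (1 + r) • (x + (s / (1 + r)) • v) := by
  rw [smul_add, smul_smul, mul_div_cancel₀ s hr, add_smul, one_smul]
  abel

noncomputable def heightPairs [Fintype V] [DecidableEq V] (x₀ : V → V) (s : F) :
    Finset (V × V) :=
  univ.image fun v => (x₀ v + s • v, x₀ v)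

theorem injective_heightPairs {x₀ : V → V} {s : F} (hs : s ≠ 0) :
    Function.Injective fun v : V => (x₀ v + s • v, x₀ v) := by
  intro v w hvw
  simp only [Prod.mk.injEq] at hvw
  rw [hvw.2, add_right_inj] at hvw
  exact smul_right_injective V hs hvw.1

theorem injOn_sub_heightPairs [Fintype V] [DecidableEq V] {x₀ : V → V} {s : F} (hs : s ≠ 0) :
    Set.InjOn (fun ab : V × V => ab.1 - ab.2) ↑(heightPairs x₀ s) := by
  simp only [heightPairs, coe_image, coe_univ, Set.image_univ]
  rintro _ ⟨v, rfl⟩ _ ⟨w, rfl⟩ hvw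
  simp only [add_sub_cancel_left] at hvw
  rw [smul_right_injective V hs hvw]

theorem card_heightPairs [Fintype V] [DecidableEq V] {x₀ : V → V} {s : F} (hs : s ≠ 0) :
    #(heightPairs x₀ s) = Fintype.card V :=
  card_image_of_injective _ (injective_heightPairs hs)

theorem card_image_heightPairs_le_card_heightSlice [Fintype V] [DecidableEq V] {E : Set (V × F)}
    {x₀ : V → V} (hE : ∀ v t, (x₀ v + t • v, t) ∈ E) (s : F) {r : F} (hr : 1 + r ≠ 0) :
    #((heightPairs x₀ s).image fun ab : V × V => ab.1 + r • ab.2) ≤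
      #(heightSlice E (s / (1 + r))) := by
  refine card_le_card_of_injOn (fun y => (1 + r)⁻¹ • y) (fun y hy => ?_)
    ((smul_right_injective V (inv_ne_zero hr)).injOn)
  obtain ⟨_, hp, rfl⟩ := mem_image.mp hy
  obtain ⟨v, -, rfl⟩ := mem_image.mp hp
  dsimp only
  rw [mem_coe, mem_heightSlice, add_smul_add_smul_eq hr, inv_smul_smul₀ hr]
  exact hE v _

theorem exists_mem_card_le_card_heightSlice [Fintype V] [DecidableEq V] {R : Finset F}
    {C α : ℝ} (hSD : SumsDifferences V R C α) (hR : (-1 : F) ∉ R) (hC : 0 ≤ C)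
    (hα : 0 ≤ α) {E : Set (V × F)} {x₀ : V → V} (hE : ∀ v t, (x₀ v + t • v, t) ∈ E) {s : F}
    (hs : s ≠ 0) :
    ∃ r ∈ R, (Fintype.card V : ℝ) ≤ C * (#(heightSlice E (s / (1 + r))) : ℝ) ^ α := by
  obtain ⟨r, hrR, hG⟩ := hSD _ (injOn_sub_heightPairs (x₀ := x₀) hs)
  refine ⟨r, hrR, ?_⟩
  rw [card_heightPairs hs] at hG
  refine hG.trans (mul_le_mul_of_nonneg_left (Real.rpow_le_rpow (by positivity) ?_ hα) hC)
  exact_mod_cast card_image_heightPairs_le_card_heightSlice hE s (one_add_ne_zero_of_mem hR hrR)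

theorem card_le_card_mul_card_add_one [Fintype F] [DecidableEq F] {R U : Finset F}
    (hR : (-1 : F) ∉ R) (hU : ∀ s ≠ 0, ∃ r ∈ R, s / (1 + r) ∈ U) :
    Fintype.card F ≤ #R * #U + 1 := by
  have hcover : univ.erase 0 ⊆ R.biUnion fun r => U.image ((1 + r) * ·) := by
    intro s hs
    obtain ⟨r, hrR, hrU⟩ := hU s (ne_of_mem_erase hs)
    exact mem_biUnion.mpr
      ⟨r, hrR, mem_image.mpr ⟨_, hrU, mul_div_cancel₀ s (one_add_ne_zero_of_mem hR hrR)⟩⟩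
  calc Fintype.card F = #(univ.erase (0 : F)) + 1 := by
        rw [card_erase_add_one (mem_univ _), card_univ]
    _ ≤ #(R.biUnion fun r => U.image ((1 + r) * ·)) + 1 := by grw [card_le_card hcover]
    _ ≤ #R * #U + 1 := by grw [card_biUnion_le_card_mul _ _ _ fun r _ => card_image_le]

end

theorem le_mul_of_rpow_le_mul_rpow {x y C α : ℝ} (hx : 0 ≤ x) (hy : 0 ≤ y) (hC : 1 ≤ C)
    (hα : 1 ≤ α) (h : y ^ α ≤ C * x ^ α) : y ≤ C * x := by
  have hC' : C ≤ C ^ α := by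
    simpa using Real.rpow_le_rpow_of_exponent_le hC hα
  rw [← Real.rpow_le_rpow_iff (z := α) hy (by positivity) (by linarith),
    Real.mul_rpow (by positivity) hx]
  exact h.trans (mul_le_mul_of_nonneg_right hC' (by positivity))

theorem card_mul_rpow_le_mul_natCard {F V : Type*} [Field F] [Fintype F] [AddCommGroup V]
    [Module F V] [Fintype V] [DecidableEq V] {R : Finset F} {C α : ℝ}
    (hSD : SumsDifferences V R C α) (hR : (-1 : F) ∉ R) (hC : 1 ≤ C) (hα : 1 ≤ α)
    {E : Set (V × F)} {x₀ : V → V} (hE : ∀ v t, (x₀ v + t • v, t) ∈ E) :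
    (Fintype.card F - 1 : ℝ) * (Fintype.card V : ℝ) ^ (1 / α) ≤ C * #R * Nat.card E := by
  classical
  set U := univ.filter fun u => (Fintype.card V : ℝ) ≤ C * (#(heightSlice E u) : ℝ) ^ α
  have hU : ∀ s ≠ 0, ∃ r ∈ R, s / (1 + r) ∈ U := fun s hs => by
    obtain ⟨r, hrR, hr⟩ :=
      exists_mem_card_le_card_heightSlice hSD hR (by linarith) (by linarith) hE hs
    exact ⟨r, hrR, mem_filter.mpr ⟨mem_univ _, hr⟩⟩
  have hrich : ∀ u ∈ U, (Fintype.card V : ℝ) ^ (1 / α) ≤ C * #(heightSlice E u) := by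
    intro u hu
    refine le_mul_of_rpow_le_mul_rpow (by positivity) (by positivity) hC hα ?_
    rw [← Real.rpow_mul (by positivity), one_div_mul_cancel (by linarith), Real.rpow_one]
    exact (mem_filter.mp hu).2
  have hcount : (Fintype.card F : ℝ) ≤ #R * #U + 1 := by
    exact_mod_cast card_le_card_mul_card_add_one hR hU
  calc (Fintype.card F - 1 : ℝ) * (Fintype.card V : ℝ) ^ (1 / α)
      ≤ #R * ∑ _u ∈ U, (Fintype.card V : ℝ) ^ (1 / α) := by
        rw [sum_const, nsmul_eq_mul, ← mul_assoc]; gcongr; linarith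
    _ ≤ #R * ∑ u ∈ U, C * #(heightSlice E u) := by gcongr with u hu; exact hrich u hu
    _ = C * #R * (∑ u ∈ U, #(heightSlice E u) : ℕ) := by push_cast; rw [← mul_sum]; ring
    _ ≤ C * #R * Nat.card E := by
        gcongr; exact_mod_cast sum_card_heightSlice_le_natCard E U

theorem statement16_general (m : ℕ) (α : ℝ) (hα : 1 ≤ α) (C : ℝ) (hC : 1 ≤ C) (k : ℕ) :
    ∃ c : ℝ, 0 < c ∧ ∀ (F : Type) [Field F] [Fintype F] [DecidableEq F],
      ∀ R : Finset F, R.Nonempty → (-1 : F) ∉ R → R.card = k →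
      (∀ G : Finset ((Fin m → F) × (Fin m → F)),
        Set.InjOn (fun ab : (Fin m → F) × (Fin m → F) => ab.1 - ab.2) ↑G →
        ∃ r ∈ R, (G.card : ℝ) ≤
          C * ((G.image (fun ab : (Fin m → F) × (Fin m → F) => ab.1 + r • ab.2)).card : ℝ) ^ α) →
      ∀ E : Set ((Fin m → F) × F), IsBesicovitch E →
        c * (Fintype.card F : ℝ) ^ ((m : ℝ) / α + 1) ≤ Nat.card E := by
  refine ⟨1 / (2 * (k + 1) * C), by positivity, ?_⟩
  intro F _ _ _ R _ hR hRk hSD E hE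
  choose x₀ hx₀ using hE
  have hbound := card_mul_rpow_le_mul_natCard (V := Fin m → F) hSD hR hC hα
    (fun v t => hx₀ v ⟨t, rfl⟩)
  have hq : (2 : ℝ) ≤ Fintype.card F := by exact_mod_cast Fintype.one_lt_card
  have hV :
      (Fintype.card (Fin m → F) : ℝ) ^ (1 / α) = (Fintype.card F : ℝ) ^ ((m : ℝ) / α) := by
    rw [Fintype.card_fun, Fintype.card_fin, Nat.cast_pow, ← Real.rpow_natCast,
      ← Real.rpow_mul (by positivity), mul_one_div]
  rw [hV, hRk] at hbound
  rw [Real.rpow_add_one (by positivity), div_mul_eq_mul_div, one_mul,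
    div_le_iff₀ (by positivity)]
  calc (Fintype.card F : ℝ) ^ ((m : ℝ) / α) * Fintype.card F
      ≤ 2 * ((Fintype.card F - 1) * (Fintype.card F : ℝ) ^ ((m : ℝ) / α)) := by
        nlinarith [Real.rpow_nonneg (Nat.cast_nonneg (Fintype.card F)) ((m : ℝ) / α)]
    _ ≤ 2 * (C * k * Nat.card E) := by gcongr
    _ ≤ 2 * (C * (k + 1) * Nat.card E) := by gcongr; linarith
    _ = Nat.card E * (2 * (k + 1) * C) := by ring

/-- The sums-differences hypothesis `SD(R, α)` (with constant `C`) implies that Besicovitch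
sets in `F^n` (here `n = m + 1 ≥ 2`) have cardinality `≳ |F|^{(n-1)/α + 1}`. -/
theorem statement16 (m : ℕ) (hm : 1 ≤ m) (α : ℝ) (hα : 1 ≤ α) (C : ℝ) (hC : 1 ≤ C) (k : ℕ) :
    ∃ c : ℝ, 0 < c ∧ ∀ (F : Type) [Field F] [Fintype F] [DecidableEq F],
      ∀ R : Finset F, R.Nonempty → (-1 : F) ∉ R → R.card = k →
      (∀ G : Finset ((Fin m → F) × (Fin m → F)),
        Set.InjOn (fun ab : (Fin m → F) × (Fin m → F) => ab.1 - ab.2) ↑G →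
        ∃ r ∈ R, (G.card : ℝ) ≤
          C * ((G.image (fun ab : (Fin m → F) × (Fin m → F) => ab.1 + r • ab.2)).card : ℝ) ^ α) →
      ∀ E : Set ((Fin m → F) × F), IsBesicovitch E →
        c * (Fintype.card F : ℝ) ^ ((m : ℝ) / α + 1) ≤ Nat.card E :=
  statement16_general m α hα C hC k
end

section
/- For every n ≥ 2 there is a constant c_n > 0 depending only on n such that for every finite field F with char(F) > 3, every Besicovitch set E ⊆ F^n satisfies |E| ≥ c_n |F|^{(4n+3)/7}. -/
open scoped BigOperators

lemma coeff_prod_of_natDegree_le' {F : Type*} [CommSemiring F] {ι : Type*} (s : Finset ι)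
    (f : ι → Polynomial F) (dd : ι → ℕ) (h : ∀ i ∈ s, (f i).natDegree ≤ dd i) :
    (∏ i ∈ s, f i).coeff (∑ i ∈ s, dd i) = ∏ i ∈ s, (f i).coeff (dd i) := by
  induction s using Finset.cons_induction with
  | empty => simp
  | cons i s his ih =>
    rw [Finset.prod_cons, Finset.sum_cons,
      Polynomial.coeff_mul_add_eq_of_natDegree_le (h i (Finset.mem_cons_self i s))
        ((Polynomial.natDegree_prod_le _ _).trans
          (Finset.sum_le_sum (fun j hj => h j (Finset.mem_cons_of_mem hj)))),
      ih (fun j hj => h j (Finset.mem_cons_of_mem hj)), Finset.prod_cons]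

lemma dvir (m : ℕ) (F : Type) [Field F] [Fintype F] (E : Set ((Fin m → F) × F))
    (hE : IsBesicovitch E) :
    ((Fintype.card F - 1) / (m + 1) + 1) ^ (m + 1) ≤ Nat.card E := by
  classical
  by_contra hlt
  push_neg at hlt
  set q := Fintype.card F with hq
  set k := (q - 1) / (m + 1) with hk
  -- the evaluation map
  obtain ⟨pt, hpt⟩ : ∃ f : (Fin m → F) × F → (Fin (m + 1) → F),
      f = fun e => Fin.snoc e.1 e.2 := ⟨_, rfl⟩
  obtain ⟨Φ, hΦ⟩ : ∃ f : ((Fin (m + 1) → Fin (k + 1)) → F) → (Fin (m + 1) → F) → F,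
      f = fun a x => ∑ d : Fin (m + 1) → Fin (k + 1), a d * ∏ i, x i ^ (d i : ℕ) := ⟨_, rfl⟩
  haveI : Fintype E := (Set.toFinite E).fintype
  -- Step 1 : a nonzero "polynomial" vanishing on E
  obtain ⟨a, ha0, haE⟩ : ∃ a : (Fin (m + 1) → Fin (k + 1)) → F, a ≠ 0 ∧
      ∀ e ∈ E, Φ a (pt e) = 0 := by
    set L : ((Fin (m + 1) → Fin (k + 1)) → F) →ₗ[F] (E → F) :=
      { toFun := fun a e => Φ a (pt e.1)
        map_add' := by
          intro a b; funext e
          simp [hΦ, add_mul, Finset.sum_add_distrib]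
        map_smul' := by
          intro c a; funext e
          simp [hΦ, Finset.mul_sum, mul_assoc] } with hL
    have hnotinj : ¬ Function.Injective L := by
      intro hinj
      have h1 := LinearMap.finrank_le_finrank_of_injective hinj
      rw [Module.finrank_fintype_fun_eq_card, Module.finrank_fintype_fun_eq_card] at h1
      rw [Fintype.card_fun, Fintype.card_fin, Fintype.card_fin] at h1
      rw [Nat.card_eq_fintype_card] at hlt
      omega
    rw [Function.not_injective_iff] at hnotinj
    obtain ⟨x, y, hxy, hne⟩ := hnotinj
    refine ⟨x - y, sub_ne_zero.mpr hne, fun e he => ?_⟩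
    have := congrFun (show L (x - y) = 0 by rw [map_sub, hxy, sub_self]) ⟨e, he⟩
    simpa [hL] using this
  -- Step 2 : top degree
  obtain ⟨S, hS⟩ : ∃ s : Finset (Fin (m + 1) → Fin (k + 1)),
      s = Finset.univ.filter (fun d => a d ≠ 0) := ⟨_, rfl⟩
  have hSne : S.Nonempty := by
    obtain ⟨d, hd⟩ := Function.ne_iff.mp ha0
    exact ⟨d, by rw [hS]; exact Finset.mem_filter.mpr ⟨Finset.mem_univ _, by simpa using hd⟩⟩
  obtain ⟨D, hD⟩ : ∃ D : ℕ, D = S.sup (fun d => ∑ i, (d i : ℕ)) := ⟨_, rfl⟩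
  obtain ⟨d₀, hd₀S, hd₀D'⟩ := Finset.exists_mem_eq_sup S hSne (fun d => ∑ i, (d i : ℕ))
  have hd₀D : D = ∑ i, (d₀ i : ℕ) := hD.trans hd₀D'
  have hdleS : ∀ d ∈ S, (∑ i, (d i : ℕ)) ≤ D := fun d hd => by
    rw [hD]; exact Finset.le_sup (f := fun d : Fin (m + 1) → Fin (k + 1) => ∑ i, (d i : ℕ)) hd
  have hDle : D ≤ (m + 1) * k := by
    rw [hD]
    refine Finset.sup_le fun d _ => ?_
    calc ∑ i, (d i : ℕ) ≤ ∑ _i : Fin (m + 1), k := Finset.sum_le_sum fun i _ => Fin.is_le _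
    _ = (m + 1) * k := by simp [Finset.sum_const, mul_comm]
  clear hD hd₀D'
  have hq1 : 1 ≤ q := Fintype.card_pos
  have hDq : D < q := by
    have : (m + 1) * k ≤ q - 1 := Nat.mul_div_le (q - 1) (m + 1) |>.trans_eq rfl
    omega
  -- Step 3+4 : key vanishing identity
  have hkey : ∀ v : Fin m → F,
      ∑ d ∈ Finset.univ.filter (fun d : Fin (m + 1) → Fin (k + 1) => (∑ i, (d i : ℕ)) = D),
        a d * ∏ j : Fin m, v j ^ (d (Fin.castSucc j) : ℕ) = 0 := by
    intro v
    obtain ⟨x₀, hx⟩ := hE v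
    obtain ⟨l, hl⟩ : ∃ l : Fin (m + 1) → F, l = Fin.snoc v 1 := ⟨_, rfl⟩
    obtain ⟨cc, hcc⟩ : ∃ c : Fin (m + 1) → F, c = Fin.snoc x₀ 0 := ⟨_, rfl⟩
    obtain ⟨g, hg⟩ : ∃ g : Fin (m + 1) → Polynomial F,
      g = fun i => Polynomial.C (cc i) + Polynomial.X * Polynomial.C (l i) := ⟨_, rfl⟩
    have hgdeg : ∀ i, (g i).natDegree ≤ 1 := by
      intro i
      rw [hg]
      refine (Polynomial.natDegree_add_le _ _).trans ?_
      simp only [Polynomial.natDegree_C, max_le_iff]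
      exact ⟨Nat.zero_le _, (Polynomial.natDegree_mul_le).trans (by simp)⟩
    obtain ⟨p, hp⟩ : ∃ p : Polynomial F,
      p = ∑ d : Fin (m + 1) → Fin (k + 1), Polynomial.C (a d) * ∏ i, (g i) ^ (d i : ℕ) := ⟨_, rfl⟩
    have htermdeg : ∀ d : Fin (m + 1) → Fin (k + 1),
        (Polynomial.C (a d) * ∏ i, (g i) ^ (d i : ℕ)).natDegree ≤ ∑ i, (d i : ℕ) := by
      intro d
      refine Polynomial.natDegree_mul_le.trans ?_
      simp only [Polynomial.natDegree_C, zero_add]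
      refine (Polynomial.natDegree_prod_le _ _).trans (Finset.sum_le_sum fun i _ => ?_)
      refine (Polynomial.natDegree_pow_le).trans ?_
      have := hgdeg i
      calc (d i : ℕ) * (g i).natDegree ≤ (d i : ℕ) * 1 := Nat.mul_le_mul_left _ (hgdeg i)
      _ = (d i : ℕ) := mul_one _
    have hpeval : ∀ t : F, p.eval t = 0 := by
      intro t
      have hmem : ((x₀ + t • v, t)) ∈ E := hx ⟨t, rfl⟩
      have h0 := haE _ hmem
      rw [hp]
      simp only [Polynomial.eval_finset_sum, Polynomial.eval_mul, Polynomial.eval_C,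
        Polynomial.eval_prod, Polynomial.eval_pow, Polynomial.eval_add, Polynomial.eval_mul,
        Polynomial.eval_X]
      rw [← h0, hΦ]
      congr 1
      funext d
      congr 1
      refine Finset.prod_congr rfl fun i _ => ?_
      congr 1
      rw [hpt]
      refine Fin.lastCases ?_ (fun j => ?_) i
      · simp only [hg, hcc, hl, Fin.snoc_last, Polynomial.eval_add, Polynomial.eval_mul,
          Polynomial.eval_C, Polynomial.eval_X]
        ring
      · simp only [hg, hcc, hl, Fin.snoc_castSucc, Polynomial.eval_add, Polynomial.eval_mul,
          Polynomial.eval_C, Polynomial.eval_X, Pi.add_apply, Pi.smul_apply, smul_eq_mul]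
    have hp0 : p = 0 := by
      refine Polynomial.eq_zero_of_natDegree_lt_card_of_eval_eq_zero p
        Function.injective_id hpeval ?_
      rw [hp]
      have hsum : ∀ d : Fin (m + 1) → Fin (k + 1), (∑ i, (d i : ℕ)) ≤ (m + 1) * k := by
        intro d
        calc ∑ i, (d i : ℕ) ≤ ∑ _i : Fin (m + 1), k := Finset.sum_le_sum fun i _ => Fin.is_le _
        _ = (m + 1) * k := by simp [Finset.sum_const, mul_comm]
      refine lt_of_le_of_lt (Polynomial.natDegree_sum_le_of_forall_le _ _
        (fun d _ => (htermdeg d).trans (hsum d))) ?_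
      have : (m + 1) * k ≤ q - 1 := Nat.mul_div_le (q - 1) (m + 1)
      omega
    -- extract the coefficient of degree D
    have hterm : ∀ d : Fin (m + 1) → Fin (k + 1),
        (Polynomial.C (a d) * ∏ i, (g i) ^ (d i : ℕ)).coeff D =
          if (∑ i, (d i : ℕ)) = D then a d * ∏ i, l i ^ (d i : ℕ) else 0 := by
      intro d
      by_cases had : a d = 0
      · simp [had]
      · have hdS : d ∈ S := by simp [hS, had]
        have hdle : (∑ i, (d i : ℕ)) ≤ D := hdleS d hdS
        rcases eq_or_lt_of_le hdle with heq | hlt'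
        · rw [if_pos heq, ← heq, Polynomial.coeff_C_mul]
          congr 1
          have := coeff_prod_of_natDegree_le' (Finset.univ : Finset (Fin (m + 1)))
            (fun i => (g i) ^ (d i : ℕ)) (fun i => (d i : ℕ)) (fun i _ => by
              refine Polynomial.natDegree_pow_le.trans ?_
              calc (d i : ℕ) * (g i).natDegree ≤ (d i : ℕ) * 1 := Nat.mul_le_mul_left _ (hgdeg i)
              _ = (d i : ℕ) := mul_one _)
          rw [this]
          refine Finset.prod_congr rfl fun i _ => ?_
          have h1 : ((g i) ^ (d i : ℕ)).coeff ((d i : ℕ) * 1) = (g i).coeff 1 ^ (d i : ℕ) :=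
            Polynomial.coeff_pow_of_natDegree_le (hgdeg i)
          rw [mul_one] at h1
          rw [h1]
          congr 1
          simp [hg, Polynomial.coeff_add, Polynomial.coeff_C]
        · rw [if_neg hlt'.ne]
          exact Polynomial.coeff_eq_zero_of_natDegree_lt ((htermdeg d).trans_lt hlt')
    have hco : p.coeff D = 0 := by rw [hp0]; simp
    rw [hp, Polynomial.finset_sum_coeff] at hco
    simp only [hterm] at hco
    rw [← Finset.sum_filter] at hco
    rw [← hco]
    refine Finset.sum_congr rfl fun d _ => ?_
    congr 1
    rw [Fin.prod_univ_castSucc]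
    simp [hl]
  -- Step 5 : build an m-variable polynomial vanishing everywhere
  obtain ⟨tr, htr⟩ : ∃ f : (Fin (m + 1) → Fin (k + 1)) → (Fin m →₀ ℕ),
      f = fun d => Finsupp.equivFunOnFinite.symm (fun j => (d (Fin.castSucc j) : ℕ)) := ⟨_, rfl⟩
  obtain ⟨T, hT⟩ : ∃ s : Finset (Fin (m + 1) → Fin (k + 1)),
      s = Finset.univ.filter (fun d => (∑ i, (d i : ℕ)) = D) := ⟨_, rfl⟩
  obtain ⟨R, hR⟩ : ∃ r : MvPolynomial (Fin m) F,
      r = ∑ d ∈ T, MvPolynomial.monomial (tr d) (a d) := ⟨_, rfl⟩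
  have hReval : ∀ v : Fin m → F, MvPolynomial.eval v R = 0 := by
    intro v
    rw [hR, hT, map_sum]
    rw [← hkey v]
    refine Finset.sum_congr rfl fun d _ => ?_
    rw [MvPolynomial.eval_monomial]
    congr 1
    rw [Finsupp.prod_pow]
    refine Finset.prod_congr rfl fun j _ => ?_
    simp [htr]
  have hmemR : R ∈ MvPolynomial.restrictDegree (Fin m) F (Fintype.card F - 1) := by
    rw [MvPolynomial.mem_restrictDegree]
    intro s hs i
    rw [hR] at hs
    obtain ⟨d, hdT, hds⟩ := Finset.mem_biUnion.mp (MvPolynomial.support_sum hs)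
    have : s = tr d := by
      have := MvPolynomial.support_monomial_subset hds
      simpa using this
    rw [this]
    have h1 : (tr d) i = (d (Fin.castSucc i) : ℕ) := by simp [htr]
    rw [h1]
    have : (d (Fin.castSucc i) : ℕ) ≤ k := Fin.is_le _
    have hk' : k ≤ q - 1 := Nat.div_le_self _ _
    omega
  have hR0 : R = 0 := MvPolynomial.eq_zero_of_eval_eq_zero (Fin m) F R hReval hmemR
  have hd₀T : d₀ ∈ T := by
    rw [hT, Finset.mem_filter]; exact ⟨Finset.mem_univ _, hd₀D.symm⟩
  have hcoeff : MvPolynomial.coeff (tr d₀) R = a d₀ := by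
    rw [hR, MvPolynomial.coeff_sum]
    simp only [MvPolynomial.coeff_monomial]
    rw [Finset.sum_eq_single_of_mem d₀ hd₀T]
    · simp
    · intro d hdT hne
      rw [if_neg]
      intro htreq
      apply hne
      have hsum : (∑ i, (d i : ℕ)) = (∑ i, (d₀ i : ℕ)) := by
        have h1 : (∑ i, (d i : ℕ)) = D := by
          rw [hT] at hdT; simpa using (Finset.mem_filter.mp hdT).2
        have h2 : (∑ i, (d₀ i : ℕ)) = D := by
          rw [hT] at hd₀T; simpa using (Finset.mem_filter.mp hd₀T).2
        omega
      have hcast : ∀ j : Fin m, (d (Fin.castSucc j) : ℕ) = (d₀ (Fin.castSucc j) : ℕ) := by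
        intro j
        have := DFunLike.congr_fun htreq j
        simpa [htr] using this
      funext i
      refine Fin.lastCases ?_ (fun j => ?_) i
      · have h3 := Fin.sum_univ_castSucc (fun i => (d i : ℕ))
        have h4 := Fin.sum_univ_castSucc (fun i => (d₀ i : ℕ))
        have h5 : ∑ j : Fin m, (d (Fin.castSucc j) : ℕ) = ∑ j : Fin m, (d₀ (Fin.castSucc j) : ℕ) :=
          Finset.sum_congr rfl fun j _ => hcast j
        have : (d (Fin.last m) : ℕ) = (d₀ (Fin.last m) : ℕ) := by omega
        exact Fin.ext this
      · exact Fin.ext (hcast j)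
  rw [hR0] at hcoeff
  simp only [MvPolynomial.coeff_zero] at hcoeff
  have : a d₀ ≠ 0 := by rw [hS] at hd₀S; simpa using (Finset.mem_filter.mp hd₀S).2
  exact this hcoeff.symm

/-- If `char F > 3` then Besicovitch sets in `F^n` (here `n = m + 1 ≥ 2`) have cardinality
`≳ |F|^{(4n+3)/7}`; note `(4n + 3) / 7 = (4m + 7) / 7`. -/
theorem statement17 (m : ℕ) (hm : 1 ≤ m) :
    ∃ c : ℝ, 0 < c ∧ ∀ (F : Type) [Field F] [Fintype F],
      3 < ringChar F →
      ∀ E : Set ((Fin m → F) × F), IsBesicovitch E →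
        c * (Fintype.card F : ℝ) ^ ((4 * (m : ℝ) + 7) / 7) ≤ Nat.card E := by
  refine ⟨((2 * ((m : ℝ) + 1)))⁻¹ ^ (m + 1), by positivity, ?_⟩
  intro F _ _ hchar E hE
  have hdvir := dvir m F E hE
  set q := Fintype.card F with hq
  set k := (q - 1) / (m + 1) with hk
  have hq2 : 1 < q := Fintype.one_lt_card
  have hqk : q ≤ (m + 1) * (k + 1) := by
    have h := Nat.lt_mul_div_succ (q - 1) (show 0 < m + 1 by omega)
    have h2 : q - 1 + 1 ≤ (m + 1) * ((q - 1) / (m + 1) + 1) := Nat.succ_le_of_lt h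
    rw [Nat.sub_add_cancel hq2.le] at h2
    exact h2
  have hcast : ((q : ℝ)) ≤ 2 * ((m : ℝ) + 1) * ((k : ℝ) + 1) := by
    have h1 : ((q : ℝ)) ≤ ((m : ℝ) + 1) * ((k : ℝ) + 1) := by exact_mod_cast hqk
    nlinarith [show (0:ℝ) ≤ ((m:ℝ)+1) * ((k:ℝ)+1) by positivity]
  have hpos : (0:ℝ) < 2 * ((m : ℝ) + 1) := by positivity
  have hdiv : (q : ℝ) / (2 * ((m : ℝ) + 1)) ≤ (k : ℝ) + 1 := by
    rw [div_le_iff₀ hpos]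
    nlinarith [hcast]
  have hq1R : (1:ℝ) ≤ (q : ℝ) := by exact_mod_cast hq2.le
  have hexp : ((4 * (m : ℝ) + 7) / 7) ≤ ((m + 1 : ℕ) : ℝ) := by
    rw [div_le_iff₀ (by norm_num : (0:ℝ) < 7)]
    push_cast
    nlinarith [show (0:ℝ) ≤ (m : ℝ) from Nat.cast_nonneg m]
  have h2 : (q : ℝ) ^ ((4 * (m : ℝ) + 7) / 7) ≤ (q : ℝ) ^ ((m + 1 : ℕ) : ℝ) :=
    Real.rpow_le_rpow_of_exponent_le hq1R hexp
  rw [Real.rpow_natCast] at h2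
  have hc : (0:ℝ) ≤ ((2 * ((m : ℝ) + 1)))⁻¹ ^ (m + 1) := by positivity
  calc ((2 * ((m : ℝ) + 1)))⁻¹ ^ (m + 1) * (q : ℝ) ^ ((4 * (m : ℝ) + 7) / 7)
      ≤ ((2 * ((m : ℝ) + 1)))⁻¹ ^ (m + 1) * (q : ℝ) ^ (m + 1) :=
        mul_le_mul_of_nonneg_left h2 hc
    _ = ((q : ℝ) / (2 * ((m : ℝ) + 1))) ^ (m + 1) := by
        rw [div_pow, inv_pow]
        ring
    _ ≤ ((k : ℝ) + 1) ^ (m + 1) := by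
        refine pow_le_pow_left₀ (by positivity) hdiv _
    _ = (((k + 1) ^ (m + 1) : ℕ) : ℝ) := by push_cast; ring
    _ ≤ (Nat.card E : ℝ) := by exact_mod_cast hdvir
end
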